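/- arXiv:1810.07403 — 4 statements merged into one kernel-verified Lean document; each statement's English description precedes it below -/
import Mathlib

section
/- Let γ_m* = (√5 − 1)/2 and fix γ > γ_m*. Then for every r ≥ 1 and every spike configuration ℓ₁ > ℓ₂ > ⋯ > ℓ_r > 1, applying the single-spike shrinker to each spike is optimal for the multi-spike condition-number objective: K_r((ℓ_i), (η₁*(ℓ_i;γ)); γ) = κ₁*(ℓ₁;γ), and for every (η_i) ∈ (0,∞)^r one has K_r((ℓ_i), (η_i); γ) ≥ κ₁*(ℓ₁;γ). -/
open Real Matrix

/-- Cosine `c(ℓ;γ)` from spiked covariance asymptotics. -/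
noncomputable def cP (γ ℓ : ℝ) : ℝ :=
  if 1 + Real.sqrt γ < ℓ then Real.sqrt ((1 - γ / (ℓ - 1) ^ 2) / (1 + γ / (ℓ - 1))) else 0

/-- Sine `s(ℓ;γ) = sqrt(1 - c²)`. -/
noncomputable def sP (γ ℓ : ℝ) : ℝ := Real.sqrt (1 - (cP γ ℓ) ^ 2)

/-- The 2×2 block `A(ℓ,η;γ)` of the asymptotic pivot. -/
noncomputable def Amat (γ ℓ η : ℝ) : Matrix (Fin 2) (Fin 2) ℝ :=
  !![(η * (cP γ ℓ) ^ 2 + (sP γ ℓ) ^ 2) / ℓ, (η - 1) * cP γ ℓ * sP γ ℓ / Real.sqrt ℓ;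
     (η - 1) * cP γ ℓ * sP γ ℓ / Real.sqrt ℓ, (cP γ ℓ) ^ 2 + η * (sP γ ℓ) ^ 2]

/-- Largest eigenvalue `ν₊(A(ℓ,η;γ))` (supremum of the real spectrum). -/
noncomputable def nuP (γ ℓ η : ℝ) : ℝ := sSup (spectrum ℝ (Amat γ ℓ η))

/-- Smallest eigenvalue `ν₋(A(ℓ,η;γ))` (infimum of the real spectrum). -/
noncomputable def nuM (γ ℓ η : ℝ) : ℝ := sInf (spectrum ℝ (Amat γ ℓ η))

/-- Threshold `ℓ₁⁺(γ) = 1 + (γ + sqrt(γ² + 8γ))/2`. -/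
noncomputable def ellOnePlus (γ : ℝ) : ℝ := 1 + (γ + Real.sqrt (γ ^ 2 + 8 * γ)) / 2

/-- Optimal single-spike shrinker `η₁*(ℓ;γ)`. -/
noncomputable def eta1star (γ ℓ : ℝ) : ℝ :=
  if ellOnePlus γ < ℓ then ℓ / (1 + γ + 2 * γ / (ℓ - 1)) else 1

/-- Optimal single-spike loss `κ₁*(ℓ;γ)`. -/
noncomputable def kappa1star (γ ℓ : ℝ) : ℝ :=
  nuP γ ℓ (eta1star γ ℓ) / nuM γ ℓ (eta1star γ ℓ)

/-- `a(ℓ;γ) = c²/ℓ + s²`. -/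
noncomputable def aP (γ ℓ : ℝ) : ℝ := (cP γ ℓ) ^ 2 / ℓ + (sP γ ℓ) ^ 2

/-- `b(ℓ;γ) = s²/ℓ + c²`. -/
noncomputable def bP (γ ℓ : ℝ) : ℝ := (sP γ ℓ) ^ 2 / ℓ + (cP γ ℓ) ^ 2

/-- Multi-spike condition-number objective `K_r((ℓᵢ),(ηᵢ);γ)`. -/
noncomputable def Kr (γ : ℝ) {r : ℕ} (ℓ η : Fin r → ℝ) : ℝ :=
  max 1 (⨆ i, nuP γ (ℓ i) (η i)) / min 1 (⨅ i, nuM γ (ℓ i) (η i))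


-- Auxiliary development
lemma ellc_gt_one {γ : ℝ} (hγ : 0 < γ) : 1 < ellOnePlus γ := by
  unfold ellOnePlus; have := Real.sqrt_nonneg (γ^2+8*γ); linarith

lemma ellc_crit {γ : ℝ} (hγ : 0 < γ) :
    (ellOnePlus γ - 1)^2 = γ*(ellOnePlus γ - 1) + 2*γ := by
  unfold ellOnePlus
  have h : Real.sqrt (γ^2+8*γ) ^2 = γ^2+8*γ := Real.sq_sqrt (by positivity)
  ring_nf at h ⊢
  nlinarith [h]

lemma ellc_sub_gt_gamma {γ : ℝ} (hγ : 0 < γ) : γ < ellOnePlus γ - 1 := by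
  unfold ellOnePlus
  have h : γ < Real.sqrt (γ^2+8*γ) := by
    rw [show γ < Real.sqrt (γ^2+8*γ) ↔ γ^2 < γ^2+8*γ from Real.lt_sqrt hγ.le]
    nlinarith
  linarith

lemma sqrt_lt_ellc {γ : ℝ} (hγ : 0 < γ) : 1 + Real.sqrt γ < ellOnePlus γ := by
  have h1 := ellc_gt_one hγ
  have hwc : 0 < ellOnePlus γ - 1 := by linarith
  have : Real.sqrt γ < ellOnePlus γ - 1 := by
    rw [show Real.sqrt γ < ellOnePlus γ - 1 ↔ γ < (ellOnePlus γ - 1)^2 from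
      Real.sqrt_lt' hwc]
    nlinarith [ellc_crit hγ]
  linarith

lemma cP_sq_eq {γ ℓ : ℝ} (hγ : 0 < γ) (h : 1 + Real.sqrt γ < ℓ) :
    (cP γ ℓ)^2 = ((ℓ-1)^2 - γ)/((ℓ-1)*(ℓ-1+γ)) := by
  have hs := Real.sqrt_nonneg γ
  have hw : 0 < ℓ - 1 := by linarith
  have hγw : γ < (ℓ-1)^2 := by nlinarith [Real.sq_sqrt hγ.le, Real.sqrt_nonneg γ]
  have harg : 0 ≤ (1 - γ / (ℓ - 1) ^ 2) / (1 + γ / (ℓ - 1)) := by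
    apply div_nonneg
    · rw [sub_nonneg, div_le_one (by positivity)]; linarith
    · positivity
  rw [cP, if_pos h, Real.sq_sqrt harg]
  rw [div_eq_div_iff (by positivity) (by positivity)]
  field_simp

lemma cP_sq_lt_one {γ ℓ : ℝ} (hγ : 0 < γ) (hℓ : 1 < ℓ) : (cP γ ℓ)^2 < 1 := by
  by_cases h : 1 + Real.sqrt γ < ℓ
  · rw [cP_sq_eq hγ h]
    have hw : 0 < ℓ - 1 := by linarith
    rw [div_lt_one (by positivity)]
    nlinarith
  · rw [cP, if_neg h]; norm_num

lemma sP_sq {γ ℓ : ℝ} (hγ : 0 < γ) (hℓ : 1 < ℓ) : (sP γ ℓ)^2 = 1 - (cP γ ℓ)^2 :=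
  Real.sq_sqrt (by linarith [cP_sq_lt_one hγ hℓ])

section ab
variable {γ ℓ : ℝ} (hγ : 0 < γ) (hℓ : 1 < ℓ)
include hγ hℓ

lemma aP_add_bP : aP γ ℓ + bP γ ℓ = 1 + 1/ℓ := by
  unfold aP bP
  rw [sP_sq hγ hℓ]
  field_simp
  ring

lemma aP_pos : 0 < aP γ ℓ := by
  unfold aP
  have h1 := cP_sq_lt_one hγ hℓ
  have h2 := sq_nonneg (cP γ ℓ)
  rw [sP_sq hγ hℓ]
  have : 0 ≤ (cP γ ℓ)^2 / ℓ := by positivity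
  linarith

lemma bP_pos : 0 < bP γ ℓ := by
  unfold bP
  have h1 := cP_sq_lt_one hγ hℓ
  have h2 := sq_nonneg (cP γ ℓ)
  rw [sP_sq hγ hℓ]
  have : 0 < (1 - (cP γ ℓ)^2) / ℓ := div_pos (by linarith) (by linarith)
  linarith

lemma aP_le_one : aP γ ℓ ≤ 1 := by
  unfold aP
  have h2 := sq_nonneg (cP γ ℓ)
  rw [sP_sq hγ hℓ]
  have : (cP γ ℓ)^2 / ℓ ≤ (cP γ ℓ)^2 := div_le_self h2 (by linarith)
  linarith

lemma bP_lt_one : bP γ ℓ < 1 := by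
  unfold bP
  have h1 := cP_sq_lt_one hγ hℓ
  rw [sP_sq hγ hℓ]
  have : (1 - (cP γ ℓ)^2) / ℓ < 1 - (cP γ ℓ)^2 := div_lt_self (by linarith) hℓ
  linarith

lemma ab_ge : 1/ℓ ≤ aP γ ℓ * bP γ ℓ := by
  unfold aP bP
  have h1 := cP_sq_lt_one hγ hℓ
  have h2 := sq_nonneg (cP γ ℓ)
  rw [sP_sq hγ hℓ]
  rw [div_le_iff₀ (by linarith : (0:ℝ) < ℓ)]
  have key : ((cP γ ℓ)^2/ℓ + (1 - (cP γ ℓ)^2)) * ((1 - (cP γ ℓ)^2)/ℓ + (cP γ ℓ)^2) * ℓ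
      = 1 + (cP γ ℓ)^2 * (1 - (cP γ ℓ)^2) * (ℓ-1)^2 / ℓ := by
    field_simp
    ring
  rw [key]
  have : 0 ≤ (cP γ ℓ)^2 * (1 - (cP γ ℓ)^2) * (ℓ-1)^2 / ℓ :=
    div_nonneg (mul_nonneg (mul_nonneg h2 (by linarith)) (sq_nonneg _)) (by linarith)
  linarith

lemma cP_sq_le_half (hsub : ¬ ellOnePlus γ < ℓ) : (cP γ ℓ)^2 ≤ 1/2 := by
  by_cases h : 1 + Real.sqrt γ < ℓ
  · rw [cP_sq_eq hγ h]
    have hs := Real.sqrt_nonneg γ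
    have hw : 0 < ℓ - 1 := by linarith
    have hwc : ℓ - 1 ≤ ellOnePlus γ - 1 := by push_neg at hsub; linarith
    have hγwc := ellc_sub_gt_gamma hγ
    have hcrit := ellc_crit hγ
    rw [div_le_iff₀ (by positivity)]
    nlinarith [mul_nonneg (sub_nonneg.2 hwc) (by linarith : (0:ℝ) ≤ ℓ - 1 + (ellOnePlus γ - 1) - γ)]
  · rw [cP, if_neg h]; norm_num

lemma bP_le_aP (hsub : ¬ ellOnePlus γ < ℓ) : bP γ ℓ ≤ aP γ ℓ := by
  unfold aP bP
  rw [sP_sq hγ hℓ]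
  have ht := cP_sq_le_half hγ hℓ hsub
  rw [← sub_nonneg]
  have key : (cP γ ℓ)^2/ℓ + (1 - (cP γ ℓ)^2) - ((1 - (cP γ ℓ)^2)/ℓ + (cP γ ℓ)^2)
      = (1 - 2*(cP γ ℓ)^2) * (ℓ - 1) / ℓ := by field_simp; ring
  rw [key]
  exact div_nonneg (mul_nonneg (by linarith) (by linarith)) (by linarith)

end ab

section super
variable {γ ℓ : ℝ} (hγ : 0 < γ) (hsup : ellOnePlus γ < ℓ)
include hγ hsup

lemma ell_gt_of_super : 1 + Real.sqrt γ < ℓ := lt_trans (sqrt_lt_ellc hγ) hsup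

lemma one_lt_of_super : 1 < ℓ := lt_trans (ellc_gt_one hγ) hsup

lemma bP_super : bP γ ℓ = (ℓ-1)/(ℓ-1+γ) := by
  have h := ell_gt_of_super hγ hsup
  have hℓ := one_lt_of_super hγ hsup
  have hw : 0 < ℓ - 1 := by linarith
  unfold bP
  rw [sP_sq hγ hℓ, cP_sq_eq hγ h]
  field_simp
  ring

lemma aP_super : aP γ ℓ = ((1+γ)*(ℓ-1)+2*γ)/(ℓ*(ℓ-1+γ)) := by
  have h := ell_gt_of_super hγ hsup
  have hℓ := one_lt_of_super hγ hsup
  have hw : 0 < ℓ - 1 := by linarith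
  unfold aP
  rw [sP_sq hγ hℓ, cP_sq_eq hγ h]
  field_simp
  ring

lemma eta_mul_aP : eta1star γ ℓ * aP γ ℓ = bP γ ℓ := by
  have hℓ := one_lt_of_super hγ hsup
  have hw : 0 < ℓ - 1 := by linarith
  rw [eta1star, if_pos hsup, aP_super hγ hsup, bP_super hγ hsup]
  have hd : 0 < 1 + γ + 2*γ/(ℓ-1) := by positivity
  field_simp

lemma eta_div_ell : eta1star γ ℓ / ℓ = (ℓ-1)/((1+γ)*(ℓ-1)+2*γ) := by
  have hℓ := one_lt_of_super hγ hsup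
  have hw : 0 < ℓ - 1 := by linarith
  rw [eta1star, if_pos hsup]
  have hd : 0 < 1 + γ + 2*γ/(ℓ-1) := by positivity
  have hq : 0 < (1+γ)*(ℓ-1)+2*γ := by positivity
  field_simp

end super

lemma eta1star_pos {γ ℓ : ℝ} (hγ : 0 < γ) (hℓ : 1 < ℓ) : 0 < eta1star γ ℓ := by
  unfold eta1star
  split_ifs with h
  · have hw : 0 < ℓ - 1 := by linarith
    exact div_pos (by linarith) (by positivity)
  · norm_num

lemma spectrum_pair (a b d : ℝ) :
    spectrum ℝ (!![a, b; b, d]) =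
      {((a+d) - Real.sqrt ((a-d)^2+4*b^2))/2, ((a+d) + Real.sqrt ((a-d)^2+4*b^2))/2} := by
  have hΔ : (0:ℝ) ≤ (a-d)^2+4*b^2 := by positivity
  have hR : (Real.sqrt ((a-d)^2+4*b^2))^2 = (a-d)^2+4*b^2 := Real.sq_sqrt hΔ
  ext x
  rw [spectrum.mem_iff]
  have hM : algebraMap ℝ (Matrix (Fin 2) (Fin 2) ℝ) x - !![a, b; b, d]
      = !![x - a, -b; -b, x - d] := by
    ext i j
    fin_cases i <;> fin_cases j <;>
      simp [Matrix.algebraMap_matrix_apply]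
  rw [hM, Matrix.isUnit_iff_isUnit_det, Matrix.det_fin_two_of, isUnit_iff_ne_zero, not_not]
  simp only [Set.mem_insert_iff, Set.mem_singleton_iff]
  constructor
  · intro h
    set R := Real.sqrt ((a-d)^2+4*b^2) with hRdef
    have key : (x - ((a+d)-R)/2) * (x - ((a+d)+R)/2) = 0 := by
      linear_combination h - (1/4 : ℝ) * hR
    rcases mul_eq_zero.mp key with h1 | h1
    · left; linarith [sub_eq_zero.mp h1]
    · right; linarith [sub_eq_zero.mp h1]
  · intro h
    rcases h with h | h <;> subst h <;> linear_combination (1/4 : ℝ) * hR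

lemma nu_formulas {γ ℓ : ℝ} (hγ : 0 < γ) (hℓ : 1 < ℓ) (η : ℝ) :
    nuP γ ℓ η = ((η*aP γ ℓ + bP γ ℓ) +
        Real.sqrt ((η*aP γ ℓ + bP γ ℓ)^2 - 4*(η/ℓ)))/2 ∧
      nuM γ ℓ η = ((η*aP γ ℓ + bP γ ℓ) -
        Real.sqrt ((η*aP γ ℓ + bP γ ℓ)^2 - 4*(η/ℓ)))/2 := by
  have hl0 : (0:ℝ) < ℓ := by linarith
  set c := cP γ ℓ with hc
  set s := sP γ ℓ with hs
  set a' := (η * c ^ 2 + s ^ 2) / ℓ with ha'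
  set b' := (η - 1) * c * s / Real.sqrt ℓ with hb'
  set d' := c ^ 2 + η * s ^ 2 with hd'
  have hAm : Amat γ ℓ η = !![a', b'; b', d'] := rfl
  have hsl : (Real.sqrt ℓ)^2 = ℓ := Real.sq_sqrt hl0.le
  have hs2 : s^2 = 1 - c^2 := sP_sq hγ hℓ
  have hsum : a' + d' = η*aP γ ℓ + bP γ ℓ := by
    rw [ha', hd', aP, bP, ← hc, ← hs]; ring
  have hb2 : b'^2 = (η-1)^2 * (c^2 * (1 - c^2)) / ℓ := by
    rw [hb', div_pow, hsl, mul_pow, mul_pow, hs2]; ring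
  have hdisc : (a'-d')^2 + 4*b'^2 = (η*aP γ ℓ + bP γ ℓ)^2 - 4*(η/ℓ) := by
    rw [hb2, ha', hd', aP, bP, ← hc, ← hs, hs2]
    field_simp
    ring
  have hspec := spectrum_pair a' b' d'
  have hsqnn := Real.sqrt_nonneg ((a'-d')^2+4*b'^2)
  constructor
  · rw [nuP, hAm, hspec, csSup_pair, sup_eq_right.mpr (by linarith), hsum, hdisc]
  · rw [nuM, hAm, hspec, csInf_pair, inf_eq_left.mpr (by linarith), hsum, hdisc]

-- abstract root lemmas
lemma sqrtD_lt {T D : ℝ} (hD : 0 < D) (hT : 0 < T) : Real.sqrt (T^2 - 4*D) < T :=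
  (Real.sqrt_lt' hT).mpr (by linarith)

lemma nu_prod {T D : ℝ} (hΔ : 0 ≤ T^2 - 4*D) :
    ((T + Real.sqrt (T^2-4*D))/2) * ((T - Real.sqrt (T^2-4*D))/2) = D := by
  have h := Real.sq_sqrt hΔ
  linear_combination (-1/4 : ℝ) * h

lemma nu_ratio_ge {T D K : ℝ} (hD : 0 < D) (hT : 0 < T) (hΔ : 0 ≤ T^2 - 4*D)
    (hK : 1 ≤ K) (h : D*(K+1)^2 ≤ T^2*K) :
    K * ((T - Real.sqrt (T^2-4*D))/2) ≤ (T + Real.sqrt (T^2-4*D))/2 := by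
  set R := Real.sqrt (T^2-4*D) with hR
  have hR0 : 0 ≤ R := Real.sqrt_nonneg _
  have hR2 : R^2 = T^2-4*D := Real.sq_sqrt hΔ
  have key : (K-1)*T ≤ (K+1)*R := by
    have h1 : ((K-1)*T)^2 ≤ ((K+1)*R)^2 := by nlinarith
    have h2 : 0 ≤ (K-1)*T := mul_nonneg (by linarith) hT.le
    have h3 : 0 ≤ (K+1)*R := mul_nonneg (by linarith) hR0
    calc (K-1)*T = Real.sqrt (((K-1)*T)^2) := (Real.sqrt_sq h2).symm
      _ ≤ Real.sqrt (((K+1)*R)^2) := Real.sqrt_le_sqrt h1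
      _ = (K+1)*R := Real.sqrt_sq h3
  linarith

lemma nuM_le_of {T D x : ℝ} (hΔ : 0 ≤ T^2 - 4*D) (hx : 0 < x) (h : x + D/x ≤ T) :
    (T - Real.sqrt (T^2-4*D))/2 ≤ x := by
  have hkey : (T - 2*x)^2 ≤ T^2 - 4*D := by
    have h2 : x*x + D ≤ T*x := by
      have := (div_le_iff₀ hx).mp (by linarith : D/x ≤ T - x)
      nlinarith
    nlinarith
  have : T - 2*x ≤ Real.sqrt (T^2-4*D) := by
    calc T - 2*x ≤ |T - 2*x| := le_abs_self _
      _ = Real.sqrt ((T-2*x)^2) := (Real.sqrt_sq_eq_abs _).symm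
      _ ≤ Real.sqrt (T^2-4*D) := Real.sqrt_le_sqrt hkey
  linarith

lemma P1 {w γ : ℝ} (hw : 0 < w) (hγ : 0 < γ) (hcrit : γ*w + 2*γ ≤ w^2) :
    (w+γ)^3 ≤ w*((1+γ)*w+2*γ)^2 := by
  nlinarith [mul_nonneg (mul_nonneg hw.le hγ.le) (sub_nonneg.2 hcrit),
    mul_nonneg hγ.le (sub_nonneg.2 hcrit), mul_pos hw hγ, sq_nonneg w, sq_nonneg γ,
    mul_pos (mul_pos hw hw) hγ, mul_pos (mul_pos hγ hγ) hw]

lemma P2 {w γ : ℝ} (hw : 0 < w) (hγ : 0 < γ) (hv : 1 ≤ γ^2 + γ) :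
    γ*w*(w^2-γ)*((1+γ)*w+2*γ)^3 ≤ (w*((1+γ)*w+2*γ)^2 - (w+γ)^3)^2 := by
  nlinarith [mul_nonneg (mul_nonneg (mul_nonneg hγ.le (pow_pos hw 5).le)
      (by linarith : (0:ℝ) ≤ w + 2*γ)) (by linarith : (0:ℝ) ≤ γ^2+γ-1),
    mul_pos hw hγ, mul_pos (mul_pos hw hw) hγ, mul_pos (mul_pos hγ hγ) hw,
    pow_pos hw 3, pow_pos hγ 3, mul_pos (pow_pos hw 3) (pow_pos hγ 2),
    mul_pos (pow_pos hw 2) (pow_pos hγ 3), mul_pos (pow_pos hw 4) hγ,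
    mul_pos hw (pow_pos hγ 4)]

noncomputable def phiB (γ ℓ : ℝ) : ℝ := (ℓ-1)/(ℓ-1+γ)
noncomputable def phiD (γ ℓ : ℝ) : ℝ := (ℓ-1)/((1+γ)*(ℓ-1)+2*γ)
noncomputable def phiG (γ ℓ : ℝ) : ℝ := (phiB γ ℓ)^2 - phiD γ ℓ
noncomputable def phiM (γ ℓ : ℝ) : ℝ := phiB γ ℓ - Real.sqrt (phiG γ ℓ)
noncomputable def phiP (γ ℓ : ℝ) : ℝ := phiB γ ℓ + Real.sqrt (phiG γ ℓ)

lemma phiG_eq {γ ℓ : ℝ} (hγ : 0 < γ) (hw : 0 < ℓ - 1) :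
    phiG γ ℓ = γ*(ℓ-1)*((ℓ-1)^2-γ)/(((ℓ-1)+γ)^2*((1+γ)*(ℓ-1)+2*γ)) := by
  unfold phiG phiB phiD
  have h1 : ℓ - 1 + γ ≠ 0 := by positivity
  have h2 : (1+γ)*(ℓ-1)+2*γ ≠ 0 := by positivity
  field_simp
  ring

lemma phiG_pos {γ ℓ : ℝ} (hγ : 0 < γ) (hw : 0 < ℓ - 1) (h2 : γ < (ℓ-1)^2) :
    0 < phiG γ ℓ := by
  rw [phiG_eq hγ hw]
  apply div_pos
  · apply mul_pos (mul_pos hγ hw); linarith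
  · positivity

-- derivative lemmas
lemma hasDerivAt_phiB {γ x : ℝ} (hd : x - 1 + γ ≠ 0) :
    HasDerivAt (phiB γ) (γ/(x-1+γ)^2) x := by
  have h1 : HasDerivAt (fun y : ℝ => y - 1) 1 x := (hasDerivAt_id x).sub_const 1
  have h2 : HasDerivAt (fun y : ℝ => y - 1 + γ) 1 x := h1.add_const γ
  have h := h1.div h2 hd
  refine h.congr_deriv ?_
  ring

lemma hasDerivAt_phiD {γ x : ℝ} (hq : (1+γ)*(x-1)+2*γ ≠ 0) :
    HasDerivAt (phiD γ) (2*γ/((1+γ)*(x-1)+2*γ)^2) x := by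
  have h1 : HasDerivAt (fun y : ℝ => y - 1) 1 x := (hasDerivAt_id x).sub_const 1
  have h2 : HasDerivAt (fun y : ℝ => (1+γ)*(y-1)+2*γ) (1+γ) x := by
    simpa using (h1.const_mul (1+γ)).add_const (2*γ)
  have h := h1.div h2 hq
  refine h.congr_deriv ?_
  ring

lemma hasDerivAt_phiG {γ x : ℝ} (hd : x - 1 + γ ≠ 0) (hq : (1+γ)*(x-1)+2*γ ≠ 0) :
    HasDerivAt (phiG γ) (2*phiB γ x*(γ/(x-1+γ)^2) - 2*γ/((1+γ)*(x-1)+2*γ)^2) x := by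
  have h1 := (hasDerivAt_phiB hd).pow 2
  have h2 := hasDerivAt_phiD hq
  have h := h1.sub h2
  refine h.congr_deriv ?_
  ring

lemma hasDerivAt_phiM {γ x : ℝ} (hd : x - 1 + γ ≠ 0) (hq : (1+γ)*(x-1)+2*γ ≠ 0)
    (hG : phiG γ x ≠ 0) :
    HasDerivAt (phiM γ)
      (γ/(x-1+γ)^2 - (2*phiB γ x*(γ/(x-1+γ)^2) - 2*γ/((1+γ)*(x-1)+2*γ)^2)
        /(2*Real.sqrt (phiG γ x))) x :=
  (hasDerivAt_phiB hd).sub ((hasDerivAt_phiG hd hq).sqrt hG)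

lemma hasDerivAt_phiP {γ x : ℝ} (hd : x - 1 + γ ≠ 0) (hq : (1+γ)*(x-1)+2*γ ≠ 0)
    (hG : phiG γ x ≠ 0) :
    HasDerivAt (phiP γ)
      (γ/(x-1+γ)^2 + (2*phiB γ x*(γ/(x-1+γ)^2) - 2*γ/((1+γ)*(x-1)+2*γ)^2)
        /(2*Real.sqrt (phiG γ x))) x :=
  (hasDerivAt_phiB hd).add ((hasDerivAt_phiG hd hq).sqrt hG)

lemma core_nonpos {γ w G : ℝ} (hγ0 : 0 < γ) (hγ2 : 1 ≤ γ^2+γ) (hw : 0 < w)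
    (hcrit : γ*w+2*γ ≤ w^2) (hG : G = γ*w*(w^2-γ)/((w+γ)^2*((1+γ)*w+2*γ))) :
    γ/(w+γ)^2 - (2*(w/(w+γ))*(γ/(w+γ)^2) - 2*γ/((1+γ)*w+2*γ)^2)/(2*Real.sqrt G) ≤ 0 := by
  have hγw2 : γ < w^2 := by nlinarith
  have hq : 0 < (1+γ)*w+2*γ := by nlinarith
  have hwγ : 0 < w + γ := by linarith
  have hGpos : 0 < G := by
    rw [hG]
    exact div_pos (mul_pos (mul_pos hγ0 hw) (by linarith))
      (mul_pos (pow_pos hwγ 2) hq)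
  have hs : 0 < Real.sqrt G := Real.sqrt_pos.mpr hGpos
  rw [sub_nonpos, le_div_iff₀ (by linarith : (0:ℝ) < 2*Real.sqrt G)]
  have hnum : 0 ≤ w*((1+γ)*w+2*γ)^2 - (w+γ)^3 := sub_nonneg.2 (P1 hw hγ0 hcrit)
  have hG'eq : 2*(w/(w+γ))*(γ/(w+γ)^2) - 2*γ/((1+γ)*w+2*γ)^2
      = 2*γ*(w*((1+γ)*w+2*γ)^2 - (w+γ)^3)/((w+γ)^3*((1+γ)*w+2*γ)^2) := by
    field_simp
  rw [hG'eq]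
  have hG'0 : 0 ≤ 2*γ*(w*((1+γ)*w+2*γ)^2 - (w+γ)^3)/((w+γ)^3*((1+γ)*w+2*γ)^2) :=
    div_nonneg (mul_nonneg (by linarith) hnum)
      (mul_nonneg (pow_pos hwγ 3).le (pow_pos hq 2).le)
  have hL0 : 0 ≤ γ/(w+γ)^2 * (2*Real.sqrt G) :=
    mul_nonneg (div_nonneg hγ0.le (sq_nonneg _)) (by linarith)
  have hsq : (γ/(w+γ)^2 * (2*Real.sqrt G))^2 = 4*(γ/(w+γ)^2)^2*G := by
    rw [mul_pow, mul_pow, Real.sq_sqrt hGpos.le]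
    ring
  have e2 : (2*γ*(w*((1+γ)*w+2*γ)^2 - (w+γ)^3)/((w+γ)^3*((1+γ)*w+2*γ)^2))^2
      - 4*(γ/(w+γ)^2)^2*G
      = 4*γ^2*((w*((1+γ)*w+2*γ)^2-(w+γ)^3)^2 - γ*w*(w^2-γ)*((1+γ)*w+2*γ)^3)
        /((w+γ)^6*((1+γ)*w+2*γ)^4) := by
    rw [hG]
    field_simp
    ring
  have hP2 := P2 hw hγ0 hγ2
  have e2nn : 0 ≤ (2*γ*(w*((1+γ)*w+2*γ)^2 - (w+γ)^3)/((w+γ)^3*((1+γ)*w+2*γ)^2))^2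
      - 4*(γ/(w+γ)^2)^2*G := by
    rw [e2]
    exact div_nonneg (by nlinarith) (mul_nonneg (pow_pos hwγ 6).le (pow_pos hq 4).le)
  calc γ/(w+γ)^2 * (2*Real.sqrt G)
      = Real.sqrt ((γ/(w+γ)^2 * (2*Real.sqrt G))^2) := (Real.sqrt_sq hL0).symm
    _ ≤ Real.sqrt ((2*γ*(w*((1+γ)*w+2*γ)^2 - (w+γ)^3)/((w+γ)^3*((1+γ)*w+2*γ)^2))^2) := by
        apply Real.sqrt_le_sqrt
        rw [hsq]
        linarith
    _ = 2*γ*(w*((1+γ)*w+2*γ)^2 - (w+γ)^3)/((w+γ)^3*((1+γ)*w+2*γ)^2) := Real.sqrt_sq hG'0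

lemma core_nonneg {γ w G : ℝ} (hγ0 : 0 < γ) (hw : 0 < w)
    (hcrit : γ*w+2*γ ≤ w^2) (hG : G = γ*w*(w^2-γ)/((w+γ)^2*((1+γ)*w+2*γ))) :
    0 ≤ γ/(w+γ)^2 + (2*(w/(w+γ))*(γ/(w+γ)^2) - 2*γ/((1+γ)*w+2*γ)^2)/(2*Real.sqrt G) := by
  have hq : 0 < (1+γ)*w+2*γ := by nlinarith
  have hwγ : 0 < w + γ := by linarith
  have hnum : 0 ≤ w*((1+γ)*w+2*γ)^2 - (w+γ)^3 := sub_nonneg.2 (P1 hw hγ0 hcrit)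
  have hG'eq : 2*(w/(w+γ))*(γ/(w+γ)^2) - 2*γ/((1+γ)*w+2*γ)^2
      = 2*γ*(w*((1+γ)*w+2*γ)^2 - (w+γ)^3)/((w+γ)^3*((1+γ)*w+2*γ)^2) := by
    field_simp
  rw [hG'eq]
  have hG'0 : 0 ≤ 2*γ*(w*((1+γ)*w+2*γ)^2 - (w+γ)^3)/((w+γ)^3*((1+γ)*w+2*γ)^2) :=
    div_nonneg (mul_nonneg (by linarith) hnum)
      (mul_nonneg (pow_pos hwγ 3).le (pow_pos hq 2).le)
  have h1 : 0 ≤ γ/(w+γ)^2 := div_nonneg hγ0.le (sq_nonneg _)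
  have h2 : 0 ≤ 2*Real.sqrt G := by positivity
  positivity

lemma phiB_contOn {γ : ℝ} (hγ0 : 0 < γ) :
    ContinuousOn (phiB γ) (Set.Ici (ellOnePlus γ)) := by
  have h1 : ∀ x ∈ Set.Ici (ellOnePlus γ), x - 1 + γ ≠ 0 := fun x hx => by
    have h := ellc_gt_one hγ0
    have hx' : ellOnePlus γ ≤ x := hx
    have : 0 < x - 1 + γ := by linarith
    linarith
  exact ContinuousOn.div
    ((continuous_id.sub continuous_const).continuousOn)
    (((continuous_id.sub continuous_const).add continuous_const).continuousOn) h1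

lemma phiG_contOn {γ : ℝ} (hγ0 : 0 < γ) :
    ContinuousOn (phiG γ) (Set.Ici (ellOnePlus γ)) := by
  have h2 : ∀ x ∈ Set.Ici (ellOnePlus γ), (1+γ)*(x-1)+2*γ ≠ 0 := fun x hx => by
    have h := ellc_gt_one hγ0
    have hx' : ellOnePlus γ ≤ x := hx
    have : 0 < (1+γ)*(x-1)+2*γ := by nlinarith
    linarith
  exact ((phiB_contOn hγ0).pow 2).sub
    (ContinuousOn.div ((continuous_id.sub continuous_const).continuousOn)
      ((continuous_const.mul (continuous_id.sub continuous_const)).add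
        continuous_const).continuousOn h2)

lemma super_facts {γ x : ℝ} (hγ0 : 0 < γ) (hx : ellOnePlus γ < x) :
    0 < x - 1 ∧ γ*(x-1)+2*γ ≤ (x-1)^2 ∧ γ < (x-1)^2 := by
  have h1 := ellc_gt_one hγ0
  have h2 := ellc_crit hγ0
  have h3 := ellc_sub_gt_gamma hγ0
  have hw : 0 < x - 1 := by linarith
  have hcrit : γ*(x-1)+2*γ ≤ (x-1)^2 := by
    nlinarith [mul_nonneg (by linarith : (0:ℝ) ≤ x - ellOnePlus γ)
      (by linarith : (0:ℝ) ≤ (x-1) + (ellOnePlus γ - 1) - γ)]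
  exact ⟨hw, hcrit, by nlinarith⟩

lemma phiM_anti {γ : ℝ} (hγ0 : 0 < γ) (hγ2 : 1 ≤ γ^2+γ) :
    AntitoneOn (phiM γ) (Set.Ici (ellOnePlus γ)) := by
  have hder : ∀ x ∈ interior (Set.Ici (ellOnePlus γ)),
      HasDerivAt (phiM γ)
        (γ/(x-1+γ)^2 - (2*phiB γ x*(γ/(x-1+γ)^2) - 2*γ/((1+γ)*(x-1)+2*γ)^2)
          /(2*Real.sqrt (phiG γ x))) x := by
    rw [interior_Ici]
    intro x hx
    obtain ⟨hw, hcrit, hγw2⟩ := super_facts hγ0 hx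
    exact hasDerivAt_phiM (ne_of_gt (by linarith)) (ne_of_gt (by nlinarith))
      (ne_of_gt (phiG_pos hγ0 hw hγw2))
  apply antitoneOn_of_deriv_nonpos (convex_Ici _)
  · exact (phiB_contOn hγ0).sub ((phiG_contOn hγ0).sqrt)
  · intro x hx
    exact (hder x hx).differentiableAt.differentiableWithinAt
  · intro x hx
    rw [(hder x hx).deriv]
    rw [interior_Ici] at hx
    obtain ⟨hw, hcrit, hγw2⟩ := super_facts hγ0 hx
    have hGe := phiG_eq hγ0 hw
    simp only [phiB]
    exact core_nonpos hγ0 hγ2 hw hcrit hGe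

lemma phiP_mono {γ : ℝ} (hγ0 : 0 < γ) :
    MonotoneOn (phiP γ) (Set.Ici (ellOnePlus γ)) := by
  have hder : ∀ x ∈ interior (Set.Ici (ellOnePlus γ)),
      HasDerivAt (phiP γ)
        (γ/(x-1+γ)^2 + (2*phiB γ x*(γ/(x-1+γ)^2) - 2*γ/((1+γ)*(x-1)+2*γ)^2)
          /(2*Real.sqrt (phiG γ x))) x := by
    rw [interior_Ici]
    intro x hx
    obtain ⟨hw, hcrit, hγw2⟩ := super_facts hγ0 hx
    exact hasDerivAt_phiP (ne_of_gt (by linarith)) (ne_of_gt (by nlinarith))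
      (ne_of_gt (phiG_pos hγ0 hw hγw2))
  apply monotoneOn_of_deriv_nonneg (convex_Ici _)
  · exact (phiB_contOn hγ0).add ((phiG_contOn hγ0).sqrt)
  · intro x hx
    exact (hder x hx).differentiableAt.differentiableWithinAt
  · intro x hx
    rw [(hder x hx).deriv]
    rw [interior_Ici] at hx
    obtain ⟨hw, hcrit, hγw2⟩ := super_facts hγ0 hx
    have hGe := phiG_eq hγ0 hw
    simp only [phiB]
    exact core_nonneg hγ0 hw hcrit hGe

lemma phi_crit {γ : ℝ} (hγ0 : 0 < γ) :
    phiP γ (ellOnePlus γ) = 1 ∧ phiM γ (ellOnePlus γ) = 1/(ellOnePlus γ) := by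
  set L := ellOnePlus γ with hLdef
  have hL : 1 < L := ellc_gt_one hγ0
  have hwc2 : (L-1)^2 = γ*(L-1)+2*γ := ellc_crit hγ0
  have hwγ : 0 < L - 1 + γ := by linarith
  have hL0 : 0 < L := by linarith
  have h2B : 2*phiB γ L = 1 + 1/L := by
    unfold phiB
    rw [show 2*((L-1)/(L-1+γ)) = (2*L-2)/(L-1+γ) by ring,
      show (1:ℝ)+1/L = (L+1)/L by field_simp,
      div_eq_div_iff hwγ.ne' hL0.ne']
    linear_combination hwc2
  have hDval : phiD γ L = 1/L := by
    unfold phiD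
    rw [div_eq_div_iff (by nlinarith) hL0.ne']
    linear_combination hwc2
  have key : phiG γ L = (phiB γ L - 1/L)^2 := by
    unfold phiG
    rw [hDval]
    have e : (phiB γ L - 1/L)^2 = (phiB γ L)^2 - (2*phiB γ L)/L + 1/L^2 := by ring
    rw [e, h2B]
    field_simp
    ring
  have hBge : 1/L ≤ phiB γ L := by
    have h1L : 1/L ≤ 1 := by rw [div_le_one hL0]; linarith
    linarith
  have hsq : Real.sqrt (phiG γ L) = phiB γ L - 1/L := by
    rw [key, Real.sqrt_sq (by linarith)]
  constructor
  · rw [phiP, hsq]; linarith [h2B]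
  · rw [phiM, hsq]; linarith [h2B]

lemma quad_ineq {a η η₀ : ℝ} (hη₀ : 0 ≤ η₀) :
    η*(η₀*a+η₀*a)^2 ≤ (η*a+η₀*a)^2*η₀ := by
  nlinarith [mul_nonneg (mul_nonneg hη₀ (sq_nonneg a)) (sq_nonneg (η-η₀))]

-- discriminant nonnegativity
lemma disc_nonneg {γ ℓ η : ℝ} (hγ0 : 0 < γ) (hℓ : 1 < ℓ) (hη : 0 < η) :
    0 ≤ (η*aP γ ℓ + bP γ ℓ)^2 - 4*(η/ℓ) := by
  have h1 : η*(1/ℓ) ≤ η*(aP γ ℓ * bP γ ℓ) :=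
    mul_le_mul_of_nonneg_left (ab_ge hγ0 hℓ) hη.le
  have h2 : η/ℓ = η*(1/ℓ) := by ring
  nlinarith [sq_nonneg (η*aP γ ℓ - bP γ ℓ)]

lemma nuM_pos {γ ℓ η : ℝ} (hγ0 : 0 < γ) (hℓ : 1 < ℓ) (hη : 0 < η) :
    0 < nuM γ ℓ η := by
  obtain ⟨_, hMf⟩ := nu_formulas hγ0 hℓ η
  have hT : 0 < η*aP γ ℓ + bP γ ℓ :=
    add_pos (mul_pos hη (aP_pos hγ0 hℓ)) (bP_pos hγ0 hℓ)
  have hD : 0 < η/ℓ := div_pos hη (by linarith)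
  have := sqrtD_lt hD hT
  rw [hMf]; linarith

lemma nu_one {γ ℓ : ℝ} (hγ0 : 0 < γ) (hℓ : 1 < ℓ) :
    nuP γ ℓ 1 = 1 ∧ nuM γ ℓ 1 = 1/ℓ := by
  obtain ⟨hPf, hMf⟩ := nu_formulas hγ0 hℓ 1
  have hab := aP_add_bP hγ0 hℓ
  have hl0 : (0:ℝ) < ℓ := by linarith
  have hT : 1*aP γ ℓ + bP γ ℓ = 1 + 1/ℓ := by rw [one_mul]; exact hab
  have hΔ : (1*aP γ ℓ + bP γ ℓ)^2 - 4*((1:ℝ)/ℓ) = (1-1/ℓ)^2 := by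
    rw [hT]; ring
  have h1ℓ : 1/ℓ ≤ 1 := by rw [div_le_one hl0]; linarith
  have hsq : Real.sqrt ((1-1/ℓ)^2) = 1-1/ℓ := Real.sqrt_sq (by linarith)
  constructor
  · rw [hPf, hΔ, hsq, hT]; ring
  · rw [hMf, hΔ, hsq, hT]; ring

lemma nu_super {γ ℓ : ℝ} (hγ0 : 0 < γ) (hsup : ellOnePlus γ < ℓ) :
    nuP γ ℓ (eta1star γ ℓ) = phiP γ ℓ ∧ nuM γ ℓ (eta1star γ ℓ) = phiM γ ℓ := by
  have hℓ := one_lt_of_super hγ0 hsup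
  obtain ⟨hPf, hMf⟩ := nu_formulas hγ0 hℓ (eta1star γ ℓ)
  have hT : eta1star γ ℓ * aP γ ℓ + bP γ ℓ = 2*phiB γ ℓ := by
    rw [eta_mul_aP hγ0 hsup, bP_super hγ0 hsup, phiB]; ring
  have hde : eta1star γ ℓ/ℓ = phiD γ ℓ := by
    rw [eta_div_ell hγ0 hsup, phiD]
  have hΔ : (eta1star γ ℓ * aP γ ℓ + bP γ ℓ)^2 - 4*(eta1star γ ℓ/ℓ) = 4*phiG γ ℓ := by
    rw [hT, hde, phiG]; ring
  have hsq : Real.sqrt (4*phiG γ ℓ) = 2*Real.sqrt (phiG γ ℓ) := by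
    rw [show (4:ℝ) = 2^2 by norm_num, Real.sqrt_mul (by positivity) _,
      Real.sqrt_sq (by norm_num : (0:ℝ) ≤ 2)]
  constructor
  · rw [hPf, hΔ, hsq, hT, phiP]; ring
  · rw [hMf, hΔ, hsq, hT, phiM]; ring

lemma eta_subcrit {γ ℓ : ℝ} (hsub : ¬ ellOnePlus γ < ℓ) : eta1star γ ℓ = 1 := by
  rw [eta1star, if_neg hsub]

lemma kappa_subcrit {γ ℓ : ℝ} (hγ0 : 0 < γ) (hℓ : 1 < ℓ) (hsub : ¬ ellOnePlus γ < ℓ) :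
    kappa1star γ ℓ = ℓ := by
  rw [kappa1star, eta_subcrit hsub, (nu_one hγ0 hℓ).1, (nu_one hγ0 hℓ).2,
    one_div_one_div]

lemma key1 {γ ℓ η : ℝ} (hγ0 : 0 < γ) (hℓ : 1 < ℓ) (hη : 0 < η) :
    kappa1star γ ℓ ≤ max 1 (nuP γ ℓ η) / min 1 (nuM γ ℓ η) := by
  obtain ⟨hPf, hMf⟩ := nu_formulas hγ0 hℓ η
  have ha := aP_pos hγ0 hℓ
  have hb := bP_pos hγ0 hℓ
  have hab := aP_add_bP hγ0 hℓ
  have ha1 := aP_le_one hγ0 hℓ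
  have hl0 : (0:ℝ) < ℓ := by linarith
  set a := aP γ ℓ with hadef
  set b := bP γ ℓ with hbdef
  set T := η*a + b with hTdef
  set D := η/ℓ with hDdef
  have hT : 0 < T := add_pos (mul_pos hη ha) hb
  have hD : 0 < D := div_pos hη hl0
  have hΔ : 0 ≤ T^2 - 4*D := disc_nonneg hγ0 hℓ hη
  have hR0 := Real.sqrt_nonneg (T^2-4*D)
  have hRT : Real.sqrt (T^2-4*D) < T := sqrtD_lt hD hT
  have hνM : 0 < nuM γ ℓ η := by rw [hMf]; linarith
  have hνPM : nuM γ ℓ η ≤ nuP γ ℓ η := by rw [hMf, hPf]; linarith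
  have hmin : 0 < min 1 (nuM γ ℓ η) := lt_min one_pos hνM
  have hFκ : nuP γ ℓ η / nuM γ ℓ η ≤ max 1 (nuP γ ℓ η) / min 1 (nuM γ ℓ η) :=
    div_le_div₀ (le_trans zero_le_one (le_max_left _ _)) (le_max_right _ _)
      hmin (min_le_right _ _)
  by_cases hsup : ellOnePlus γ < ℓ
  · -- supercritical
    set η₀ := eta1star γ ℓ with hη₀def
    have hη₀ : 0 < η₀ := eta1star_pos hγ0 hℓ
    have hea : η₀ * a = b := eta_mul_aP hγ0 hsup
    set T₀ := η₀*a + b with hT₀def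
    set D₀ := η₀/ℓ with hD₀def
    obtain ⟨hP₀, hM₀⟩ := nu_formulas hγ0 hℓ η₀
    have hT₀p : 0 < T₀ := add_pos (mul_pos hη₀ ha) hb
    have hD₀p : 0 < D₀ := div_pos hη₀ hl0
    have hΔ₀ : 0 ≤ T₀^2 - 4*D₀ := disc_nonneg hγ0 hℓ hη₀
    have hR₀T : Real.sqrt (T₀^2-4*D₀) < T₀ := sqrtD_lt hD₀p hT₀p
    have hR₀0 := Real.sqrt_nonneg (T₀^2-4*D₀)
    have hν₀M : 0 < nuM γ ℓ η₀ := by rw [hM₀]; linarith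
    have hν₀PM : nuM γ ℓ η₀ ≤ nuP γ ℓ η₀ := by rw [hM₀, hP₀]; linarith
    have hKval : kappa1star γ ℓ = nuP γ ℓ η₀ / nuM γ ℓ η₀ := rfl
    set K := kappa1star γ ℓ with hKdef
    have hK1 : 1 ≤ K := by
      rw [hKval, le_div_iff₀ hν₀M, one_mul]; exact hν₀PM
    have hprod : nuP γ ℓ η₀ * nuM γ ℓ η₀ = D₀ := by
      rw [hP₀, hM₀]; exact nu_prod hΔ₀
    have hsum : nuP γ ℓ η₀ + nuM γ ℓ η₀ = T₀ := by rw [hP₀, hM₀]; ring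
    have hKp1 : (K + 1)*(nuM γ ℓ η₀) = T₀ := by
      rw [hKval, div_add' _ _ _ hν₀M.ne', div_mul_cancel₀ _ hν₀M.ne']
      linear_combination hsum
    have hKD : K * (nuM γ ℓ η₀)^2 = D₀ := by
      rw [hKval, ← hprod, pow_two, div_mul_eq_mul_div, mul_comm (nuM γ ℓ η₀) _,
        ← mul_assoc, mul_div_assoc, div_self hν₀M.ne', mul_one]
    have hds : D*T₀^2 ≤ T^2*D₀ := by
      have h1 : η*(η₀*a+b)^2 ≤ (η*a+b)^2*η₀ := by
        rw [← hea]
        exact quad_ineq hη₀.le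
      calc D*T₀^2 = η*(η₀*a+b)^2/ℓ := by rw [hDdef, hT₀def]; ring
        _ ≤ (η*a+b)^2*η₀/ℓ := (div_le_div_iff_of_pos_right hl0).mpr h1
        _ = T^2*D₀ := by rw [hD₀def, hTdef]; ring
    have hTD : D*(K+1)^2 ≤ T^2*K := by
      have e1 : D*(K+1)^2*(nuM γ ℓ η₀)^2 = D*T₀^2 := by
        rw [← hKp1]; ring
      have e2 : T^2*K*(nuM γ ℓ η₀)^2 = T^2*D₀ := by rw [← hKD]; ring
      have hnu2 : 0 < (nuM γ ℓ η₀)^2 := pow_pos hν₀M 2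
      have : D*(K+1)^2*(nuM γ ℓ η₀)^2 ≤ T^2*K*(nuM γ ℓ η₀)^2 := by
        rw [e1, e2]; exact hds
      exact le_of_mul_le_mul_right this hnu2
    have hKνP := nu_ratio_ge hD hT hΔ hK1 hTD
    have hKle : K ≤ nuP γ ℓ η / nuM γ ℓ η := by
      rw [le_div_iff₀ hνM, hPf, hMf]; exact hKνP
    linarith
  · -- subcritical
    rw [kappa_subcrit hγ0 hℓ hsup]
    rcases le_or_gt η 1 with hle | hgt
    · have hM1 : nuM γ ℓ η ≤ 1/ℓ := by
        rw [hMf]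
        apply nuM_le_of hΔ (by positivity : (0:ℝ) < 1/ℓ)
        have hDx : D/(1/ℓ) = η := by rw [hDdef]; field_simp
        rw [hDx, hTdef]
        nlinarith [mul_nonneg (sub_nonneg.2 ha1) (sub_nonneg.2 hle)]
      rw [le_div_iff₀ hmin]
      have h2 : ℓ * min 1 (nuM γ ℓ η) ≤ ℓ * (1/ℓ) :=
        mul_le_mul_of_nonneg_left (le_trans (min_le_right _ _) hM1) hl0.le
      have h3 : ℓ*(1/ℓ) = 1 := by field_simp
      exact le_trans (by linarith) (le_max_left _ _)
    · have hba := bP_le_aP hγ0 hℓ hsup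
      have hTD : D*(ℓ+1)^2 ≤ T^2*ℓ := by
        have h2 : b^2 ≤ η*a^2 := by nlinarith
        have h1 : η*(a+b)^2 ≤ (η*a+b)^2 := by
          nlinarith [mul_nonneg (sub_nonneg.2 hgt.le) (sub_nonneg.2 h2)]
        have e : D*(ℓ+1)^2 = η*(a+b)^2*ℓ := by
          rw [hDdef, hab]; field_simp
        rw [e, hTdef]
        calc η*(a+b)^2*ℓ ≤ (η*a+b)^2*ℓ := mul_le_mul_of_nonneg_right h1 hl0.le
          _ = (η*a+b)^2*ℓ := rfl
      have hKνP := nu_ratio_ge hD hT hΔ hℓ.le hTD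
      have hKle : ℓ ≤ nuP γ ℓ η / nuM γ ℓ η := by
        rw [le_div_iff₀ hνM, hPf, hMf]; exact hKνP
      linarith

lemma nuP_star_ge_one {γ ℓ : ℝ} (hγ0 : 0 < γ) (hℓ : 1 < ℓ) :
    1 ≤ nuP γ ℓ (eta1star γ ℓ) := by
  by_cases hsup : ellOnePlus γ < ℓ
  · rw [(nu_super hγ0 hsup).1, ← (phi_crit hγ0).1]
    exact phiP_mono hγ0 Set.self_mem_Ici (Set.mem_Ici.2 hsup.le) hsup.le
  · rw [eta_subcrit hsup, (nu_one hγ0 hℓ).1]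

lemma nuM_star_le_one {γ ℓ : ℝ} (hγ0 : 0 < γ) (hγ2 : 1 ≤ γ^2+γ) (hℓ : 1 < ℓ) :
    nuM γ ℓ (eta1star γ ℓ) ≤ 1 := by
  have hc1 := ellc_gt_one hγ0
  by_cases hsup : ellOnePlus γ < ℓ
  · rw [(nu_super hγ0 hsup).2]
    calc phiM γ ℓ ≤ phiM γ (ellOnePlus γ) :=
          phiM_anti hγ0 hγ2 Set.self_mem_Ici (Set.mem_Ici.2 hsup.le) hsup.le
      _ = 1/(ellOnePlus γ) := (phi_crit hγ0).2
      _ ≤ 1 := by rw [div_le_one (by linarith)]; linarith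
  · rw [eta_subcrit hsup, (nu_one hγ0 hℓ).2]
    rw [div_le_one (by linarith)]; linarith

lemma nuP_star_mono {γ x y : ℝ} (hγ0 : 0 < γ) (hx : 1 < x) (hxy : x ≤ y) :
    nuP γ x (eta1star γ x) ≤ nuP γ y (eta1star γ y) := by
  by_cases hy : ellOnePlus γ < y
  · by_cases hx' : ellOnePlus γ < x
    · rw [(nu_super hγ0 hx').1, (nu_super hγ0 hy).1]
      exact phiP_mono hγ0 (Set.mem_Ici.2 hx'.le) (Set.mem_Ici.2 (hx'.le.trans hxy)) hxy
    · rw [eta_subcrit hx', (nu_one hγ0 hx).1]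
      exact nuP_star_ge_one hγ0 (lt_of_lt_of_le hx hxy)
  · have hx' : ¬ ellOnePlus γ < x := fun h => hy (lt_of_lt_of_le h hxy)
    rw [eta_subcrit hx', (nu_one hγ0 hx).1, eta_subcrit hy,
      (nu_one hγ0 (lt_of_lt_of_le hx hxy)).1]

lemma nuM_star_anti {γ x y : ℝ} (hγ0 : 0 < γ) (hγ2 : 1 ≤ γ^2+γ) (hx : 1 < x)
    (hxy : x ≤ y) : nuM γ y (eta1star γ y) ≤ nuM γ x (eta1star γ x) := by
  have hy1 : 1 < y := lt_of_lt_of_le hx hxy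
  have hc1 := ellc_gt_one hγ0
  by_cases hy : ellOnePlus γ < y
  · by_cases hx' : ellOnePlus γ < x
    · rw [(nu_super hγ0 hx').2, (nu_super hγ0 hy).2]
      exact phiM_anti hγ0 hγ2 (Set.mem_Ici.2 hx'.le) (Set.mem_Ici.2 (hx'.le.trans hxy)) hxy
    · rw [eta_subcrit hx', (nu_one hγ0 hx).2, (nu_super hγ0 hy).2]
      push_neg at hx'
      calc phiM γ y ≤ phiM γ (ellOnePlus γ) :=
            phiM_anti hγ0 hγ2 Set.self_mem_Ici (Set.mem_Ici.2 hy.le) hy.le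
        _ = 1/(ellOnePlus γ) := (phi_crit hγ0).2
        _ ≤ 1/x := by
            apply one_div_le_one_div_of_le (by linarith) hx'
  · have hx' : ¬ ellOnePlus γ < x := fun h => hy (lt_of_lt_of_le h hxy)
    rw [eta_subcrit hx', (nu_one hγ0 hx).2, eta_subcrit hy, (nu_one hγ0 hy1).2]
    exact one_div_le_one_div_of_le (by linarith) hxy


/-- for `γ > (√5 − 1)/2`, applying the single-spike shrinker
spike-by-spike is optimal for the multi-spike objective. -/
theorem stmt10 (γ : ℝ) (hγ : (Real.sqrt 5 - 1) / 2 < γ) (r : ℕ) (hr : 1 ≤ r)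
    (ℓ : Fin r → ℝ) (hdec : StrictAnti ℓ) (hℓ : ∀ i, 1 < ℓ i) :
    Kr γ ℓ (fun i => eta1star γ (ℓ i)) = kappa1star γ (ℓ ⟨0, hr⟩) ∧
    ∀ η : Fin r → ℝ, (∀ i, 0 < η i) →
      kappa1star γ (ℓ ⟨0, hr⟩) ≤ Kr γ ℓ η := by
  have hs5 : Real.sqrt 5 ^ 2 = 5 := Real.sq_sqrt (by norm_num)
  have hs5n := Real.sqrt_nonneg 5
  have h15 : (1:ℝ) < Real.sqrt 5 := by nlinarith
  have hγ0 : 0 < γ := by linarith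
  have hγ2 : 1 ≤ γ^2+γ := by nlinarith
  have hne : Nonempty (Fin r) := ⟨⟨0, hr⟩⟩
  set i0 : Fin r := ⟨0, hr⟩ with hi0
  have hL0 : ∀ i, ℓ i ≤ ℓ i0 := fun i => hdec.antitone (by simp [hi0, Fin.le_def])
  constructor
  · have hP_le : ∀ i, nuP γ (ℓ i) (eta1star γ (ℓ i)) ≤ nuP γ (ℓ i0) (eta1star γ (ℓ i0)) :=
      fun i => nuP_star_mono hγ0 (hℓ i) (hL0 i)
    have hM_ge : ∀ i, nuM γ (ℓ i0) (eta1star γ (ℓ i0)) ≤ nuM γ (ℓ i) (eta1star γ (ℓ i)) :=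
      fun i => nuM_star_anti hγ0 hγ2 (hℓ i) (hL0 i)
    have hsup_eq : (⨆ i, nuP γ (ℓ i) (eta1star γ (ℓ i)))
        = nuP γ (ℓ i0) (eta1star γ (ℓ i0)) :=
      le_antisymm (ciSup_le hP_le)
        (le_ciSup (f := fun i => nuP γ (ℓ i) (eta1star γ (ℓ i)))
          (Set.Finite.bddAbove (Set.finite_range _)) i0)
    have hinf_eq : (⨅ i, nuM γ (ℓ i) (eta1star γ (ℓ i)))
        = nuM γ (ℓ i0) (eta1star γ (ℓ i0)) :=
      le_antisymm (ciInf_le (f := fun i => nuM γ (ℓ i) (eta1star γ (ℓ i)))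
          (Set.Finite.bddBelow (Set.finite_range _)) i0)
        (le_ciInf hM_ge)
    rw [Kr]
    rw [hsup_eq, hinf_eq, max_eq_right (nuP_star_ge_one hγ0 (hℓ i0)),
      min_eq_right (nuM_star_le_one hγ0 hγ2 (hℓ i0))]
    rfl
  · intro η hη
    have hkey := key1 (ℓ := ℓ i0) (η := η i0) hγ0 (hℓ i0) (hη i0)
    have hbP : nuP γ (ℓ i0) (η i0) ≤ ⨆ i, nuP γ (ℓ i) (η i) :=
      le_ciSup (f := fun i => nuP γ (ℓ i) (η i))
        (Set.Finite.bddAbove (Set.finite_range _)) i0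
    have hbM : (⨅ i, nuM γ (ℓ i) (η i)) ≤ nuM γ (ℓ i0) (η i0) :=
      ciInf_le (f := fun i => nuM γ (ℓ i) (η i))
        (Set.Finite.bddBelow (Set.finite_range _)) i0
    have hposi : ∀ i, 0 < nuM γ (ℓ i) (η i) := fun i => nuM_pos hγ0 (hℓ i) (hη i)
    obtain ⟨j, hj⟩ := Finite.exists_min (fun i => nuM γ (ℓ i) (η i))
    have hinfpos : 0 < ⨅ i, nuM γ (ℓ i) (η i) :=
      lt_of_lt_of_le (hposi j) (le_ciInf hj)
    have hpos : 0 < min 1 (⨅ i, nuM γ (ℓ i) (η i)) := lt_min one_pos hinfpos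
    calc kappa1star γ (ℓ i0)
        ≤ max 1 (nuP γ (ℓ i0) (η i0)) / min 1 (nuM γ (ℓ i0) (η i0)) := hkey
      _ ≤ Kr γ ℓ η := by
          rw [Kr]
          exact div_le_div₀ (le_trans zero_le_one (le_max_left _ _))
            (max_le_max le_rfl hbP) hpos (min_le_min le_rfl hbM)
end

section
/- Fix γ > 0 and ν₀ > 1. Then: (a) for every ℓ > 1 there exists η > 0 with ν₊(A(ℓ,η;γ)) = ν₀; (b) whenever ν₊(A(ℓ,η;γ)) = ν₀ for some ℓ > 1 and η > 0, one has ν₋(A(ℓ,η;γ)) = η/(ℓ·ν₀); (c) consequently, if ℓ₁ > ℓ₂ > 1 and η₁, η₂ > 0 satisfy ν₊(A(ℓ₁,η₁;γ)) = ν₊(A(ℓ₂,η₂;γ)) = ν₀ and η₁/ℓ₁ < η₂/ℓ₂, then ν₋(A(ℓ₁,η₁;γ)) < ν₋(A(ℓ₂,η₂;γ)). -/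
open Real Matrix

/-! ### Auxiliary lemmas -/

/-- Spectrum of a real symmetric 2×2 matrix. -/
lemma spec2_aux (a b d : ℝ) : spectrum ℝ !![a,b;b,d] =
    {((a+d) - Real.sqrt ((a-d)^2+4*b^2))/2, ((a+d) + Real.sqrt ((a-d)^2+4*b^2))/2} := by
  have hΔ : (0:ℝ) ≤ (a-d)^2+4*b^2 := by positivity
  have hs : Real.sqrt ((a-d)^2+4*b^2)^2 = (a-d)^2+4*b^2 := Real.sq_sqrt hΔ
  ext μ
  rw [spectrum.mem_iff, Matrix.isUnit_iff_isUnit_det, isUnit_iff_ne_zero, not_not]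
  have hM : (algebraMap ℝ (Matrix (Fin 2) (Fin 2) ℝ)) μ - !![a,b;b,d] = !![μ-a,-b;-b,μ-d] := by
    ext i j; fin_cases i <;> fin_cases j <;> simp [Matrix.algebraMap_eq_diagonal]
  rw [hM, Matrix.det_fin_two_of]
  have key : (μ-a)*(μ-d) - -b * -b =
      (μ - ((a+d) - Real.sqrt ((a-d)^2+4*b^2))/2) *
        (μ - ((a+d) + Real.sqrt ((a-d)^2+4*b^2))/2) := by
    linear_combination (1/4 : ℝ) * hs
  rw [key, mul_eq_zero, sub_eq_zero, sub_eq_zero]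
  simp [Set.mem_insert_iff]

lemma sSup_spec2_aux (a b d : ℝ) : sSup (spectrum ℝ !![a,b;b,d]) =
    ((a+d) + Real.sqrt ((a-d)^2+4*b^2))/2 := by
  rw [spec2_aux, csSup_pair]
  have : ((a+d) - Real.sqrt ((a-d)^2+4*b^2))/2 ≤ ((a+d) + Real.sqrt ((a-d)^2+4*b^2))/2 := by
    have := Real.sqrt_nonneg ((a-d)^2+4*b^2); linarith
  exact sup_eq_right.mpr this

lemma sInf_spec2_aux (a b d : ℝ) : sInf (spectrum ℝ !![a,b;b,d]) =
    ((a+d) - Real.sqrt ((a-d)^2+4*b^2))/2 := by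
  rw [spec2_aux, csInf_pair]
  have : ((a+d) - Real.sqrt ((a-d)^2+4*b^2))/2 ≤ ((a+d) + Real.sqrt ((a-d)^2+4*b^2))/2 := by
    have := Real.sqrt_nonneg ((a-d)^2+4*b^2); linarith
  exact inf_eq_left.mpr this

noncomputable def aE (γ ℓ η : ℝ) : ℝ := (η * (cP γ ℓ) ^ 2 + (sP γ ℓ) ^ 2) / ℓ
noncomputable def bE (γ ℓ η : ℝ) : ℝ := (η - 1) * cP γ ℓ * sP γ ℓ / Real.sqrt ℓ
noncomputable def dE (γ ℓ η : ℝ) : ℝ := (cP γ ℓ) ^ 2 + η * (sP γ ℓ) ^ 2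

lemma nuP_eq_aux (γ ℓ η : ℝ) : nuP γ ℓ η =
    ((aE γ ℓ η + dE γ ℓ η) + Real.sqrt ((aE γ ℓ η - dE γ ℓ η)^2 + 4*(bE γ ℓ η)^2))/2 := by
  rw [nuP, Amat, aE, bE, dE, sSup_spec2_aux]

lemma nuM_eq_aux (γ ℓ η : ℝ) : nuM γ ℓ η =
    ((aE γ ℓ η + dE γ ℓ η) - Real.sqrt ((aE γ ℓ η - dE γ ℓ η)^2 + 4*(bE γ ℓ η)^2))/2 := by
  rw [nuM, Amat, aE, bE, dE, sInf_spec2_aux]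

lemma cP_sq_le_one_aux {γ ℓ : ℝ} (hγ : 0 < γ) (hℓ : 1 < ℓ) : cP γ ℓ ^ 2 ≤ 1 := by
  rw [cP]
  split_ifs with h
  · have hl1 : (0:ℝ) < ℓ - 1 := by linarith
    have hden : (0:ℝ) < 1 + γ / (ℓ - 1) := by positivity
    have hx : (1 - γ / (ℓ - 1) ^ 2) / (1 + γ / (ℓ - 1)) ≤ 1 := by
      rw [div_le_one hden]
      have h1 : 0 ≤ γ / (ℓ - 1) ^ 2 := by positivity
      have h2 : 0 ≤ γ / (ℓ - 1) := by positivity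
      linarith
    have h1 := Real.sqrt_le_one.mpr hx
    have h0 := Real.sqrt_nonneg ((1 - γ / (ℓ - 1) ^ 2) / (1 + γ / (ℓ - 1)))
    nlinarith
  · norm_num

lemma sP_sq_aux {γ ℓ : ℝ} (hγ : 0 < γ) (hℓ : 1 < ℓ) : sP γ ℓ ^ 2 = 1 - cP γ ℓ ^ 2 :=
  Real.sq_sqrt (by linarith [cP_sq_le_one_aux hγ hℓ])

lemma det_eq_aux {γ ℓ : ℝ} (η : ℝ) (hγ : 0 < γ) (hℓ : 1 < ℓ) :
    aE γ ℓ η * dE γ ℓ η - (bE γ ℓ η)^2 = η / ℓ := by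
  have hl : (0:ℝ) < ℓ := by linarith
  have h : Real.sqrt ℓ ^ 2 = ℓ := Real.sq_sqrt hl.le
  have hs2 := sP_sq_aux hγ hℓ
  rw [aE, bE, dE]
  have hb : ((η-1) * cP γ ℓ * sP γ ℓ / Real.sqrt ℓ)^2
      = (η-1)^2 * (cP γ ℓ)^2 * (sP γ ℓ)^2 / ℓ := by
    rw [div_pow, h]; ring
  rw [hb, hs2]
  field_simp
  ring

lemma prod_eq_aux {γ ℓ : ℝ} (η : ℝ) (hγ : 0 < γ) (hℓ : 1 < ℓ) :
    nuP γ ℓ η * nuM γ ℓ η = η / ℓ := by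
  rw [nuP_eq_aux, nuM_eq_aux]
  have hΔ : (0:ℝ) ≤ (aE γ ℓ η - dE γ ℓ η)^2 + 4*(bE γ ℓ η)^2 := by positivity
  have hs : Real.sqrt ((aE γ ℓ η - dE γ ℓ η)^2 + 4*(bE γ ℓ η)^2)^2
      = (aE γ ℓ η - dE γ ℓ η)^2 + 4*(bE γ ℓ η)^2 := Real.sq_sqrt hΔ
  have hdet := det_eq_aux (γ := γ) (ℓ := ℓ) η hγ hℓ
  linear_combination (-1/4 : ℝ) * hs + hdet

/-- attainability of any top eigenvalue level `ν₀ > 1`, the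
identity `ν₋ = η/(ℓν₀)` on the level set `ν₊ = ν₀`, and the resulting
comparison of bottom eigenvalues. -/
theorem stmt13 (γ ν₀ : ℝ) (hγ : 0 < γ) (hν : 1 < ν₀) :
    (∀ ℓ : ℝ, 1 < ℓ → ∃ η : ℝ, 0 < η ∧ nuP γ ℓ η = ν₀) ∧
    (∀ ℓ η : ℝ, 1 < ℓ → 0 < η → nuP γ ℓ η = ν₀ →
      nuM γ ℓ η = η / (ℓ * ν₀)) ∧
    (∀ ℓ₁ ℓ₂ η₁ η₂ : ℝ, 1 < ℓ₂ → ℓ₂ < ℓ₁ → 0 < η₁ → 0 < η₂ →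
      nuP γ ℓ₁ η₁ = ν₀ → nuP γ ℓ₂ η₂ = ν₀ → η₁ / ℓ₁ < η₂ / ℓ₂ →
      nuM γ ℓ₁ η₁ < nuM γ ℓ₂ η₂) := by
  have hb : ∀ ℓ η : ℝ, 1 < ℓ → 0 < η → nuP γ ℓ η = ν₀ → nuM γ ℓ η = η / (ℓ * ν₀) := by
    intro ℓ η hℓ hη hset
    have hprod := prod_eq_aux (γ := γ) (ℓ := ℓ) η hγ hℓ
    rw [hset] at hprod
    have hν0 : ν₀ ≠ 0 := by linarith
    have hl0 : ℓ ≠ 0 := by linarith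
    rw [eq_div_iff (mul_ne_zero hl0 hν0)]
    field_simp at hprod
    linarith [hprod]
  refine ⟨?_, hb, ?_⟩
  · -- part (a): attainability
    intro ℓ hℓ
    have hl0 : (0:ℝ) < ℓ := by linarith
    have hs2 := sP_sq_aux hγ hℓ
    have hc0 := sq_nonneg (cP γ ℓ)
    have hs0 := sq_nonneg (sP γ ℓ)
    set f : ℝ → ℝ := fun η =>
      ((aE γ ℓ η + dE γ ℓ η) + Real.sqrt ((aE γ ℓ η - dE γ ℓ η)^2 + 4*(bE γ ℓ η)^2))/2
      with hf
    have hcont : Continuous f := by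
      rw [hf]
      unfold aE bE dE
      apply Continuous.div_const
      apply Continuous.add
      · fun_prop
      · apply Real.continuous_sqrt.comp
        fun_prop
    -- endpoints
    set ηm : ℝ := (ν₀ - 1)/2 with hηm
    set ηp : ℝ := 2 * ℓ * ν₀ with hηp
    have hηm0 : 0 < ηm := by rw [hηm]; linarith
    have hle : ηm ≤ ηp := by rw [hηm, hηp]; nlinarith
    have hc2le := cP_sq_le_one_aux hγ hℓ
    have hsum : ∀ η : ℝ, aE γ ℓ η + dE γ ℓ η =
        (η * (cP γ ℓ)^2 + (sP γ ℓ)^2 + (cP γ ℓ)^2 * ℓ + η * (sP γ ℓ)^2 * ℓ)/ℓ := by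
      intro η
      rw [aE, dE]
      field_simp
      ring
    have hTub : ∀ η : ℝ, 0 < η →
        aE γ ℓ η + dE γ ℓ η ≤ 1 + η := by
      intro η hη
      rw [hsum η, div_le_iff₀ hl0]
      have e1 : η * ℓ * sP γ ℓ ^ 2 = η * ℓ * (1 - cP γ ℓ ^ 2) := by rw [hs2]
      nlinarith [hs2, e1, hc0, hs0, hc2le, mul_nonneg hη.le hc0,
        mul_nonneg (by linarith : (0:ℝ) ≤ ℓ - 1)
          (by nlinarith [mul_nonneg hη.le hc0] : (0:ℝ) ≤ 1 - (1-η) * (cP γ ℓ)^2)]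
    have hTlb : ∀ η : ℝ, 0 < η → η / ℓ ≤ aE γ ℓ η + dE γ ℓ η := by
      intro η hη
      rw [hsum η]
      gcongr
      have e2 : η * sP γ ℓ ^ 2 = η * (1 - cP γ ℓ ^ 2) := by rw [hs2]
      nlinarith [hs2, e2, hc0, hs0, mul_nonneg hc0 hl0.le,
        mul_nonneg (mul_nonneg hη.le hs0) (by linarith : (0:ℝ) ≤ ℓ - 1),
        mul_nonneg (mul_nonneg hη.le hs0) hl0.le]
    have hTpos : ∀ η : ℝ, 0 < η → 0 ≤ aE γ ℓ η + dE γ ℓ η := by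
      intro η hη
      have := hTlb η hη
      have : 0 ≤ η / ℓ := by positivity
      linarith [hTlb η hη]
    -- f ηm < ν₀
    have hfm : f ηm < ν₀ := by
      have hΔle : (aE γ ℓ ηm - dE γ ℓ ηm)^2 + 4*(bE γ ℓ ηm)^2
          ≤ (aE γ ℓ ηm + dE γ ℓ ηm)^2 := by
        have hdet := det_eq_aux (γ := γ) (ℓ := ℓ) ηm hγ hℓ
        have : 0 ≤ ηm / ℓ := by positivity
        nlinarith [hdet]
      have hsq : Real.sqrt ((aE γ ℓ ηm - dE γ ℓ ηm)^2 + 4*(bE γ ℓ ηm)^2)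
          ≤ aE γ ℓ ηm + dE γ ℓ ηm := by
        calc Real.sqrt ((aE γ ℓ ηm - dE γ ℓ ηm)^2 + 4*(bE γ ℓ ηm)^2)
            ≤ Real.sqrt ((aE γ ℓ ηm + dE γ ℓ ηm)^2) := Real.sqrt_le_sqrt hΔle
          _ = aE γ ℓ ηm + dE γ ℓ ηm := Real.sqrt_sq (hTpos ηm hηm0)
      have hT := hTub ηm hηm0
      have : f ηm ≤ aE γ ℓ ηm + dE γ ℓ ηm := by rw [hf]; dsimp only; linarith
      have h1η : 1 + ηm < ν₀ := by rw [hηm]; linarith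
      linarith
    -- ν₀ ≤ f ηp
    have hfp : ν₀ ≤ f ηp := by
      have hηp0 : 0 < ηp := by rw [hηp]; nlinarith
      have hT := hTlb ηp hηp0
      have hsq := Real.sqrt_nonneg ((aE γ ℓ ηp - dE γ ℓ ηp)^2 + 4*(bE γ ℓ ηp)^2)
      have hdv : ηp / ℓ = 2 * ν₀ := by rw [hηp]; field_simp
      rw [hf]; dsimp only
      rw [hdv] at hT
      linarith
    have hIVT := intermediate_value_Icc hle hcont.continuousOn
    have hmem : ν₀ ∈ Set.Icc (f ηm) (f ηp) := ⟨hfm.le, hfp⟩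
    obtain ⟨η, hη, hfη⟩ := hIVT hmem
    exact ⟨η, by linarith [hη.1], by rw [nuP_eq_aux]; exact hfη⟩
  · -- part (c)
    intro ℓ₁ ℓ₂ η₁ η₂ hℓ₂ hℓ₁₂ hη₁ hη₂ h1 h2 hlt
    have hℓ₁ : 1 < ℓ₁ := lt_trans hℓ₂ hℓ₁₂
    rw [hb ℓ₁ η₁ hℓ₁ hη₁ h1, hb ℓ₂ η₂ hℓ₂ hη₂ h2]
    have hν0 : (0:ℝ) < ν₀ := by linarith
    rw [← div_div, ← div_div]
    gcongr
end

section
/- Fix γ > 0 and let ℓ₁ > ℓ > 1. Then ν₋(A(ℓ₁, η₁*(ℓ₁;γ); γ)) < 1/(a(ℓ;γ)·ℓ), where a(ℓ;γ)·ℓ = ℓ·s(ℓ;γ)² + c(ℓ;γ)². -/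
open Real Matrix

lemma spectrum_fin_two' (a b d : ℝ) :
    spectrum ℝ !![a, b; b, d] = {x : ℝ | (x - a) * (x - d) - b * b = 0} := by
  ext x
  rw [spectrum.mem_iff, Matrix.isUnit_iff_isUnit_det, isUnit_iff_ne_zero, not_ne_iff]
  have h1 : (algebraMap ℝ (Matrix (Fin 2) (Fin 2) ℝ)) x - !![a, b; b, d]
      = !![x - a, -b; -b, x - d] := by
    ext i j
    fin_cases i <;> fin_cases j <;>
      simp [Matrix.algebraMap_matrix_apply, Matrix.one_apply]
  rw [h1, Matrix.det_fin_two_of, Set.mem_setOf_eq]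
  constructor <;> intro h <;> linear_combination h

lemma sInf_spectrum_lt' (a b d x₀ : ℝ)
    (h : (x₀ - a) * (x₀ - d) - b * b < 0) :
    sInf (spectrum ℝ !![a, b; b, d]) < x₀ := by
  have hD : (0:ℝ) ≤ (a - d) ^ 2 + 4 * b ^ 2 := by positivity
  set s := Real.sqrt ((a - d) ^ 2 + 4 * b ^ 2) with hs_def
  have hs : s ^ 2 = (a - d) ^ 2 + 4 * b ^ 2 := Real.sq_sqrt hD
  have hs0 : 0 ≤ s := Real.sqrt_nonneg _
  set lm := (a + d - s) / 2 with hlm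
  set lp := (a + d + s) / 2 with hlp
  have key : ∀ x : ℝ, (x - a) * (x - d) - b * b = (x - lm) * (x - lp) := by
    intro x
    rw [hlm, hlp]
    linear_combination hs / 4
  have hspec : spectrum ℝ !![a, b; b, d] = {lm, lp} := by
    rw [spectrum_fin_two']
    ext x
    simp only [Set.mem_setOf_eq, Set.mem_insert_iff, Set.mem_singleton_iff]
    rw [key x, mul_eq_zero, sub_eq_zero, sub_eq_zero]
  have hle : lm ≤ lp := by rw [hlm, hlp]; linarith
  rw [hspec, csInf_pair, min_eq_left hle]
  have h2 := h
  rw [key x₀] at h2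
  by_contra hcon
  push_neg at hcon
  nlinarith [mul_nonneg (sub_nonneg.2 hcon) (by linarith : (0:ℝ) ≤ lp - x₀)]

lemma nuM_lt_of (γ l η x₀ : ℝ) (hl : 0 < l)
    (h : (x₀ - (η * (cP γ l) ^ 2 + (sP γ l) ^ 2) / l) *
          (x₀ - ((cP γ l) ^ 2 + η * (sP γ l) ^ 2)) -
          (η - 1) ^ 2 * (cP γ l) ^ 2 * (sP γ l) ^ 2 / l < 0) :
    nuM γ l η < x₀ := by
  unfold nuM Amat
  apply sInf_spectrum_lt'
  have hb : (η - 1) * cP γ l * sP γ l / Real.sqrt l * ((η - 1) * cP γ l * sP γ l / Real.sqrt l)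
      = (η - 1) ^ 2 * (cP γ l) ^ 2 * (sP γ l) ^ 2 / l := by
    rw [div_mul_div_comm, Real.mul_self_sqrt hl.le]; ring
  rw [hb]; exact h

lemma cs_facts (γ x : ℝ) (hγ : 0 < γ) (hx : 1 < x) :
    cP γ x ^ 2 < 1 ∧ sP γ x ^ 2 = 1 - cP γ x ^ 2 := by
  have h1 : cP γ x ^ 2 < 1 := by
    unfold cP
    split_ifs with h
    · have hm : (0:ℝ) < x - 1 := by linarith
      have hγm : γ < (x - 1) ^ 2 := (Real.sqrt_lt' hm).1 (by linarith)
      have hnum : 0 < 1 - γ / (x - 1) ^ 2 := by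
        rw [sub_pos, div_lt_one (by positivity)]; exact hγm
      have hden : 1 < 1 + γ / (x - 1) := by
        have : 0 < γ / (x - 1) := by positivity
        linarith
      have harg : 0 ≤ (1 - γ / (x - 1) ^ 2) / (1 + γ / (x - 1)) := by positivity
      rw [Real.sq_sqrt harg, div_lt_one (by linarith)]
      have : 0 < γ / (x - 1) ^ 2 := by positivity
      linarith
    · norm_num
  refine ⟨h1, ?_⟩
  unfold sP
  rw [Real.sq_sqrt (by nlinarith [sq_nonneg (cP γ x)])]

lemma cP_sq_super (γ x : ℝ) (hγ : 0 < γ) (h : 1 + Real.sqrt γ < x) :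
    cP γ x ^ 2 = ((x - 1) ^ 2 - γ) / ((x - 1) * ((x - 1) + γ)) := by
  have hm : (0:ℝ) < x - 1 := by
    have := Real.sqrt_nonneg γ; linarith
  have hγm : γ < (x - 1) ^ 2 := (Real.sqrt_lt' hm).1 (by linarith)
  have hnum : 0 < 1 - γ / (x - 1) ^ 2 := by
    rw [sub_pos, div_lt_one (by positivity)]; exact hγm
  have hden : (0:ℝ) < 1 + γ / (x - 1) := by
    have : 0 < γ / (x - 1) := by positivity
    linarith
  unfold cP
  rw [if_pos h, Real.sq_sqrt (le_of_lt (div_pos hnum hden))]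
  field_simp

lemma quad_neg (A B C x M : ℝ) (hA : 0 ≤ A) (h1 : A + B + C ≤ 0)
    (hM : A * M ^ 2 + B * M + C < 0) (hx1 : 1 < x) (hxM : x ≤ M) :
    A * x ^ 2 + B * x + C < 0 := by
  nlinarith [mul_nonneg (mul_nonneg (mul_nonneg hA (by linarith : (0:ℝ) ≤ x - 1))
      (by linarith : (0:ℝ) ≤ M - x)) (by linarith : (0:ℝ) ≤ M - 1),
    mul_nonneg (by linarith : (0:ℝ) ≤ M - x) (by linarith : (0:ℝ) ≤ -(A + B + C)),
    mul_pos (by linarith : (0:ℝ) < x - 1) (by linarith : (0:ℝ) < -(A * M ^ 2 + B * M + C))]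


lemma aux_step (t k γ : ℝ) (ht0 : 0 < t) (ht1 : t ≤ 1) (ht2 : t ^ 2 = γ) (hkt : t < k) :
    (k - t) * (k + γ) ≤ k ^ 2 - γ := by
  nlinarith [mul_nonneg (mul_nonneg ht0.le (by linarith : (0:ℝ) ≤ 1 - t))
    (by linarith : (0:ℝ) ≤ k - t)]

lemma aux_M1t (t m γ : ℝ) (ht0 : 0 < t) (ht1 : 1 ≤ t) (ht2 : t ^ 2 = γ) (htm : t < m) :
    (1 + t) * (m + γ) ≤ m * (1 + γ) + 2 * γ := by
  nlinarith [mul_nonneg (mul_nonneg ht0.le (by linarith : (0:ℝ) ≤ t - 1))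
    (by linarith : (0:ℝ) ≤ m - t)]

lemma aux_frac (γ ℓ m : ℝ) (hγ1 : 1 ≤ γ) (hγ0 : 0 < γ) (hle : ℓ ≤ m + 1) :
    γ * ℓ * (m + γ) ≤ γ * (m + 1) * (ℓ - 1 + γ) := by
  nlinarith [mul_nonneg (mul_nonneg hγ0.le (by linarith : (0:ℝ) ≤ m + 1 - ℓ))
    (by linarith : (0:ℝ) ≤ γ - 1)]

set_option maxHeartbeats 2000000 in
/-- for `ℓ₁ > ℓ > 1`, `ν₋(A(ℓ₁,η₁*(ℓ₁;γ);γ)) < 1/(a(ℓ;γ)·ℓ)`,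
where `a(ℓ;γ)·ℓ = ℓ·s² + c²`. -/
theorem stmt16 (γ ℓ₁ ℓ : ℝ) (hγ : 0 < γ) (hℓ : 1 < ℓ) (hℓ₁ : ℓ < ℓ₁) :
    aP γ ℓ * ℓ = ℓ * (sP γ ℓ) ^ 2 + (cP γ ℓ) ^ 2 ∧
    nuM γ ℓ₁ (eta1star γ ℓ₁) < 1 / (aP γ ℓ * ℓ) := by
  have hl0 : (0:ℝ) < ℓ := by linarith
  have hl10 : (0:ℝ) < ℓ₁ := by linarith
  have hl11 : (1:ℝ) < ℓ₁ := by linarith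
  obtain ⟨hc1, hs2⟩ := cs_facts γ ℓ hγ hℓ
  have hc0 : 0 ≤ cP γ ℓ ^ 2 := sq_nonneg _
  have haT : aP γ ℓ * ℓ = ℓ * sP γ ℓ ^ 2 + cP γ ℓ ^ 2 := by
    unfold aP; field_simp; ring
  refine ⟨haT, ?_⟩
  set T := aP γ ℓ * ℓ with hTdef
  have hTval : T = ℓ - (ℓ - 1) * cP γ ℓ ^ 2 := by rw [haT, hs2]; ring
  have hT1 : 1 < T := by
    rw [hTval]
    nlinarith [mul_pos (show (0:ℝ) < ℓ - 1 by linarith)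
      (show (0:ℝ) < 1 - cP γ ℓ ^ 2 by linarith)]
  have hTl : T ≤ ℓ := by
    rw [hTval]
    nlinarith [mul_nonneg (show (0:ℝ) ≤ ℓ - 1 by linarith) hc0]
  have hT0 : (0:ℝ) < T := by linarith
  obtain ⟨hc1', hs2'⟩ := cs_facts γ ℓ₁ hγ hl11
  by_cases hB : ellOnePlus γ < ℓ₁
  · -- supercritical case
    set t := Real.sqrt γ with htdef
    have ht2 : t ^ 2 = γ := Real.sq_sqrt hγ.le
    have ht0 : 0 < t := Real.sqrt_pos.2 hγ
    set m := ℓ₁ - 1 with hmdef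
    have hm0 : 0 < m := by rw [hmdef]; linarith
    have hl1m : ℓ₁ = m + 1 := by rw [hmdef]; ring
    have hsq8 : Real.sqrt (γ ^ 2 + 8 * γ) ^ 2 = γ ^ 2 + 8 * γ := Real.sq_sqrt (by positivity)
    have hsb : Real.sqrt (γ ^ 2 + 8 * γ) < 2 * m - γ := by
      have h := hB
      unfold ellOnePlus at h
      rw [hl1m] at h
      linarith
    have hm2 : γ * (m + 2) < m ^ 2 := by
      nlinarith [Real.sqrt_nonneg (γ ^ 2 + 8 * γ), hsq8, hsb,
        sq_nonneg (Real.sqrt (γ ^ 2 + 8 * γ) - (2 * m - γ))]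
    have hγm2 : γ < m ^ 2 := by nlinarith
    have htm : t < m := by
      rw [htdef]; exact (Real.sqrt_lt' hm0).2 hγm2
    have hsup : 1 + Real.sqrt γ < ℓ₁ := by
      rw [hl1m, ← htdef]; linarith
    have hmγ0 : 0 < m + γ := by linarith
    have hc2' : cP γ ℓ₁ ^ 2 = (m ^ 2 - γ) / (m * (m + γ)) := by
      rw [cP_sq_super γ ℓ₁ hγ hsup, ← hmdef]
    have hs2'' : sP γ ℓ₁ ^ 2 = γ * ℓ₁ / (m * (m + γ)) := by
      rw [hs2', hc2', hl1m]
      field_simp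
      ring
    set R := m * (1 + γ) + 2 * γ with hRdef
    have hR0 : 0 < R := by rw [hRdef]; nlinarith
    have hηval : eta1star γ ℓ₁ = ℓ₁ * m / R := by
      unfold eta1star
      rw [if_pos hB, ← hmdef, hRdef]
      rw [div_eq_div_iff (by positivity) (by nlinarith)]
      · field_simp
    have hkey : ∀ x : ℝ,
        (x - (ℓ₁ * m / R * ((m ^ 2 - γ) / (m * (m + γ))) + γ * ℓ₁ / (m * (m + γ))) / ℓ₁) *
          (x - ((m ^ 2 - γ) / (m * (m + γ)) + ℓ₁ * m / R * (γ * ℓ₁ / (m * (m + γ))))) -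
          (ℓ₁ * m / R - 1) ^ 2 * ((m ^ 2 - γ) / (m * (m + γ))) * (γ * ℓ₁ / (m * (m + γ))) / ℓ₁
        = x ^ 2 - 2 * m / (m + γ) * x + m / R := by
      intro x
      rw [hl1m, hRdef]
      have h1 : m ≠ 0 := hm0.ne'
      have h2 : m + γ ≠ 0 := hmγ0.ne'
      have h3 : m * (1 + γ) + 2 * γ ≠ 0 := by nlinarith
      have h4 : m + 1 ≠ 0 := by nlinarith
      field_simp
      ring
    have hQ1 : m / R + (-(2 * m / (m + γ))) + 1 ≤ 0 := by
      have hQ1num : m * (m + γ) - 2 * m * R + R * (m + γ) < 0 := by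
        rw [hRdef]
        nlinarith [mul_pos hγ (sub_pos.2 hm2)]
      have heq : m / R + (-(2 * m / (m + γ))) + 1
          = (m * (m + γ) - 2 * m * R + R * (m + γ)) / (R * (m + γ)) := by
        field_simp
        ring
      rw [heq]
      exact (div_neg_of_neg_of_pos hQ1num (mul_pos hR0 hmγ0)).le
    obtain ⟨M, hQM, hTM⟩ : ∃ M : ℝ,
        (m / R * M ^ 2 + (-(2 * m / (m + γ))) * M + 1 < 0) ∧ T ≤ M := by
      rcases le_or_gt γ 1 with hγ1 | hγ1
      · -- M = 1 + t
        have ht1 : t ≤ 1 := by rw [htdef]; exact Real.sqrt_le_one.mpr hγ1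
        refine ⟨1 + t, ?_, ?_⟩
        · have hMnum : m * (m + γ) * (1 + t) ^ 2 - 2 * m * R * (1 + t) + R * (m + γ)
              = 2 * t ^ 3 * (m + 1) * (t - m) := by
            rw [hRdef, ← ht2]; ring
          have hMneg : m * (m + γ) * (1 + t) ^ 2 - 2 * m * R * (1 + t) + R * (m + γ) < 0 := by
            rw [hMnum]
            have := mul_neg_of_pos_of_neg
              (mul_pos (by positivity : (0:ℝ) < 2 * t ^ 3) (by linarith : (0:ℝ) < m + 1))
              (by linarith : t - m < 0)
            linarith
          have heq : m / R * (1 + t) ^ 2 + (-(2 * m / (m + γ))) * (1 + t) + 1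
              = (m * (m + γ) * (1 + t) ^ 2 - 2 * m * R * (1 + t) + R * (m + γ)) / (R * (m + γ)) := by
            field_simp
            ring
          rw [heq]
          exact div_neg_of_neg_of_pos hMneg (mul_pos hR0 hmγ0)
        · -- T ≤ 1 + t
          rcases le_or_gt ℓ (1 + t) with hll | hll
          · have hc0l : cP γ ℓ = 0 := by
              unfold cP
              rw [if_neg (not_lt.2 (by rw [← htdef]; exact hll))]
            rw [hTval, hc0l]
            norm_num
            linarith
          · have hll' : 1 + Real.sqrt γ < ℓ := by rw [← htdef]; exact hll
            have hk0 : (0:ℝ) < ℓ - 1 := by linarith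
            have hkt : t < ℓ - 1 := by linarith
            have hkγ0 : (0:ℝ) < (ℓ - 1) + γ := by linarith
            have hc2l : cP γ ℓ ^ 2 = ((ℓ - 1) ^ 2 - γ) / ((ℓ - 1) * ((ℓ - 1) + γ)) :=
              cP_sq_super γ ℓ hγ hll'
            have hTexp : T = ℓ - ((ℓ - 1) ^ 2 - γ) / ((ℓ - 1) + γ) := by
              rw [hTval, hc2l]
              field_simp
            have hstep : (ℓ - 1 - t) * ((ℓ - 1) + γ) ≤ (ℓ - 1) ^ 2 - γ :=
              aux_step t (ℓ - 1) γ ht0 ht1 ht2 hkt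
            have h2 : ℓ - 1 - t ≤ ((ℓ - 1) ^ 2 - γ) / ((ℓ - 1) + γ) :=
              (le_div_iff₀ hkγ0).2 hstep
            rw [hTexp]
            linarith
      · -- M = R / (m + γ)
        have ht1 : 1 ≤ t := by
          rw [htdef, ← Real.sqrt_one]; exact Real.sqrt_le_sqrt hγ1.le
        refine ⟨R / (m + γ), ?_, ?_⟩
        · have heq : m / R * (R / (m + γ)) ^ 2 + (-(2 * m / (m + γ))) * (R / (m + γ)) + 1
              = γ * (γ - m ^ 2) / (m + γ) ^ 2 := by
            rw [hRdef]
            field_simp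
            ring
          rw [heq]
          exact div_neg_of_neg_of_pos
            (mul_neg_of_pos_of_neg hγ (by linarith)) (by positivity)
        · have hM1t : 1 + t ≤ R / (m + γ) := by
            rw [le_div_iff₀ hmγ0, hRdef]
            exact aux_M1t t m γ ht0 ht1 ht2 htm
          rcases le_or_gt ℓ (1 + t) with hll | hll
          · have hc0l : cP γ ℓ = 0 := by
              unfold cP
              rw [if_neg (not_lt.2 (by rw [← htdef]; exact hll))]
            rw [hTval, hc0l]
            norm_num
            linarith
          · have hll' : 1 + Real.sqrt γ < ℓ := by rw [← htdef]; exact hll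
            have hk0 : (0:ℝ) < ℓ - 1 := by linarith
            have hkγ0 : (0:ℝ) < (ℓ - 1) + γ := by linarith
            have hc2l : cP γ ℓ ^ 2 = ((ℓ - 1) ^ 2 - γ) / ((ℓ - 1) * ((ℓ - 1) + γ)) :=
              cP_sq_super γ ℓ hγ hll'
            have hTexp2 : T = 1 + γ * ℓ / ((ℓ - 1) + γ) := by
              rw [hTval, hc2l]
              field_simp
              ring
            have hMexp : R / (m + γ) = 1 + γ * ℓ₁ / (m + γ) := by
              rw [hRdef, hl1m]
              field_simp
              ring
            rw [hTexp2, hMexp]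
            have hfrac : γ * ℓ / ((ℓ - 1) + γ) ≤ γ * ℓ₁ / (m + γ) := by
              rw [div_le_div_iff₀ hkγ0 hmγ0, hl1m]
              have := aux_frac γ ℓ m hγ1.le hγ (by rw [← hl1m]; linarith)
              linarith
            linarith
    have hQ : m / R * T ^ 2 + (-(2 * m / (m + γ))) * T + 1 < 0 :=
      quad_neg (m / R) (-(2 * m / (m + γ))) 1 T M
        (le_of_lt (div_pos hm0 hR0)) hQ1 hQM hT1 hTM
    apply nuM_lt_of γ ℓ₁ _ _ hl10
    rw [hηval, hc2', hs2'']
    have hfinal : (1 / T) ^ 2 - 2 * m / (m + γ) * (1 / T) + m / R < 0 := by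
      have heq2 : (1 / T) ^ 2 - 2 * m / (m + γ) * (1 / T) + m / R
          = (m / R * T ^ 2 + (-(2 * m / (m + γ))) * T + 1) / T ^ 2 := by
        field_simp
        ring
      rw [heq2]
      exact div_neg_of_neg_of_pos hQ (by positivity)
    exact lt_of_eq_of_lt (hkey (1 / T)) hfinal
  · -- subcritical: η = 1
    have hη : eta1star γ ℓ₁ = 1 := if_neg hB
    rw [hη]
    apply nuM_lt_of γ ℓ₁ 1 _ hl10
    rw [hs2']
    have h1T : 1 / ℓ₁ < 1 / T := one_div_lt_one_div_of_lt hT0 (lt_of_le_of_lt hTl hℓ₁)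
    have h2T : 1 / T < 1 := by rw [div_lt_one hT0]; exact hT1
    have e : (1 / T - (1 * cP γ ℓ₁ ^ 2 + (1 - cP γ ℓ₁ ^ 2)) / ℓ₁) *
        (1 / T - (cP γ ℓ₁ ^ 2 + 1 * (1 - cP γ ℓ₁ ^ 2))) -
        (1 - 1) ^ 2 * cP γ ℓ₁ ^ 2 * (1 - cP γ ℓ₁ ^ 2) / ℓ₁
        = (1 / T - 1 / ℓ₁) * (1 / T - 1) := by ring
    rw [e]
    nlinarith [mul_pos (sub_pos.2 h1T) (sub_pos.2 h2T)]
end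

section
/- Fix M > 1 and p ≥ 1. Let Δ be a p×p real symmetric matrix all of whose eigenvalues lie in the interval [1/M, M], and let Δ′ be a p×p real symmetric matrix with Frobenius distance ‖Δ′ − Δ‖_F < 1/(2M). Then Δ′ is positive definite and |κ(Δ′) − κ(Δ)| ≤ 4M³·‖Δ′ − Δ‖_F, where κ(·) denotes the condition number (largest eigenvalue divided by smallest eigenvalue) of a symmetric positive definite matrix. -/
open Real Matrix

/-- Condition number `κ(M) = λmax(M)/λmin(M)` (ratio of the supremum to the
infimum of the real spectrum). -/
noncomputable def condNum {p : ℕ} (M : Matrix (Fin p) (Fin p) ℝ) : ℝ :=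
  sSup (spectrum ℝ M) / sInf (spectrum ℝ M)

/-- Frobenius norm of a real matrix. -/
noncomputable def frobNorm {p : ℕ} (M : Matrix (Fin p) (Fin p) ℝ) : ℝ :=
  Real.sqrt (∑ i, ∑ j, (M i j) ^ 2)

variable {p : ℕ}

lemma inner_eq_dot (u v : EuclideanSpace ℝ (Fin p)) : (inner ℝ u v : ℝ) = u ⬝ᵥ v := by
  simp [PiLp.inner_apply, dotProduct, mul_comm]

lemma quad_eq {A : Matrix (Fin p) (Fin p) ℝ} (hH : A.IsHermitian) (x : Fin p → ℝ) :
    x ⬝ᵥ A *ᵥ x = ∑ i, hH.eigenvalues i * (x ⬝ᵥ ⇑(hH.eigenvectorBasis i)) ^ 2 ∧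
    x ⬝ᵥ x = ∑ i, (x ⬝ᵥ ⇑(hH.eigenvectorBasis i)) ^ 2 := by
  have hT : Aᵀ = A := by
    rw [← Matrix.conjTranspose_eq_transpose_of_trivial]; exact hH
  have h1 : ∀ (y : Fin p → ℝ), x ⬝ᵥ y =
      ∑ i, (x ⬝ᵥ ⇑(hH.eigenvectorBasis i)) * (⇑(hH.eigenvectorBasis i) ⬝ᵥ y) := by
    intro y
    have := hH.eigenvectorBasis.sum_inner_mul_inner (WithLp.toLp 2 x : EuclideanSpace ℝ (Fin p))
      (WithLp.toLp 2 y : EuclideanSpace ℝ (Fin p))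
    simp only [inner_eq_dot, WithLp.ofLp_toLp] at this
    exact this.symm
  constructor
  · rw [h1 (A *ᵥ x)]
    refine Finset.sum_congr rfl fun i _ => ?_
    have h2 : ⇑(hH.eigenvectorBasis i) ⬝ᵥ (A *ᵥ x)
        = hH.eigenvalues i * (⇑(hH.eigenvectorBasis i) ⬝ᵥ x) := by
      rw [Matrix.dotProduct_mulVec, ← Matrix.mulVec_transpose, hT,
        hH.mulVec_eigenvectorBasis, smul_dotProduct]
      simp
    rw [h2, dotProduct_comm x]
    ring
  · rw [h1 x]
    refine Finset.sum_congr rfl fun i _ => ?_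
    rw [dotProduct_comm x]
    ring

lemma exists_greatest_spec {A : Matrix (Fin p) (Fin p) ℝ} (hp : 1 ≤ p) (hH : A.IsHermitian) :
    ∃ i, IsGreatest (spectrum ℝ A) (hH.eigenvalues i) := by
  have : Nonempty (Fin p) := ⟨⟨0, hp⟩⟩
  obtain ⟨i, -, hi⟩ := Finset.exists_max_image Finset.univ hH.eigenvalues ⟨Classical.arbitrary _, Finset.mem_univ _⟩
  refine ⟨i, hH.eigenvalues_mem_spectrum_real i, ?_⟩
  rw [hH.spectrum_real_eq_range_eigenvalues]
  rintro - ⟨j, rfl⟩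
  exact hi j (Finset.mem_univ _)

lemma exists_least_spec {A : Matrix (Fin p) (Fin p) ℝ} (hp : 1 ≤ p) (hH : A.IsHermitian) :
    ∃ i, IsLeast (spectrum ℝ A) (hH.eigenvalues i) := by
  have : Nonempty (Fin p) := ⟨⟨0, hp⟩⟩
  obtain ⟨i, -, hi⟩ := Finset.exists_min_image Finset.univ hH.eigenvalues ⟨Classical.arbitrary _, Finset.mem_univ _⟩
  refine ⟨i, hH.eigenvalues_mem_spectrum_real i, ?_⟩
  rw [hH.spectrum_real_eq_range_eigenvalues]
  rintro - ⟨j, rfl⟩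
  exact hi j (Finset.mem_univ _)

lemma rayleigh_bounds {A : Matrix (Fin p) (Fin p) ℝ} (hp : 1 ≤ p) (hH : A.IsHermitian)
    (x : Fin p → ℝ) :
    sInf (spectrum ℝ A) * (x ⬝ᵥ x) ≤ x ⬝ᵥ A *ᵥ x ∧
    x ⬝ᵥ A *ᵥ x ≤ sSup (spectrum ℝ A) * (x ⬝ᵥ x) := by
  obtain ⟨hq1, hq2⟩ := quad_eq hH x
  obtain ⟨imax, hmax⟩ := exists_greatest_spec hp hH
  obtain ⟨imin, hmin⟩ := exists_least_spec hp hH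
  have hsup : sSup (spectrum ℝ A) = hH.eigenvalues imax := hmax.csSup_eq
  have hinf : sInf (spectrum ℝ A) = hH.eigenvalues imin := hmin.csInf_eq
  rw [hq1, hq2, hsup, hinf, Finset.mul_sum, Finset.mul_sum]
  constructor
  · refine Finset.sum_le_sum fun i _ => ?_
    exact mul_le_mul_of_nonneg_right (hmin.2 (hH.eigenvalues_mem_spectrum_real i)) (sq_nonneg _)
  · refine Finset.sum_le_sum fun i _ => ?_
    exact mul_le_mul_of_nonneg_right (hmax.2 (hH.eigenvalues_mem_spectrum_real i)) (sq_nonneg _)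

lemma exists_unit_eigvec {A : Matrix (Fin p) (Fin p) ℝ} (hH : A.IsHermitian) (i : Fin p) :
    ∃ v : Fin p → ℝ, v ⬝ᵥ v = 1 ∧ A *ᵥ v = hH.eigenvalues i • v := by
  refine ⟨⇑(hH.eigenvectorBasis i), ?_, hH.mulVec_eigenvectorBasis i⟩
  have h := hH.eigenvectorBasis.orthonormal
  rw [orthonormal_iff_ite] at h
  have := h i i
  simp only [if_pos rfl] at this
  rw [← inner_eq_dot]
  exact this

lemma frobNorm_nonneg' (A : Matrix (Fin p) (Fin p) ℝ) : 0 ≤ frobNorm A := Real.sqrt_nonneg _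

lemma quad_form_le_frob (E : Matrix (Fin p) (Fin p) ℝ) (x : Fin p → ℝ) (hx : x ⬝ᵥ x = 1) :
    |x ⬝ᵥ E *ᵥ x| ≤ frobNorm E := by
  have hx' : ∑ i, x i ^ 2 = 1 := by
    rw [← hx]; exact Finset.sum_congr rfl fun i _ => (sq (x i)).symm ▸ rfl
  have h1 : (x ⬝ᵥ E *ᵥ x) ^ 2 ≤ ∑ i, (E *ᵥ x) i ^ 2 := by
    have := Finset.sum_mul_sq_le_sq_mul_sq Finset.univ x (E *ᵥ x)
    rw [hx', one_mul] at this
    exact this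
  have h2 : ∀ i, (E *ᵥ x) i ^ 2 ≤ ∑ j, E i j ^ 2 := by
    intro i
    have := Finset.sum_mul_sq_le_sq_mul_sq Finset.univ (E i) x
    rw [hx', mul_one] at this
    exact this
  have h3 : (x ⬝ᵥ E *ᵥ x) ^ 2 ≤ ∑ i, ∑ j, E i j ^ 2 :=
    h1.trans (Finset.sum_le_sum fun i _ => h2 i)
  calc |x ⬝ᵥ E *ᵥ x| = Real.sqrt ((x ⬝ᵥ E *ᵥ x) ^ 2) := (Real.sqrt_sq_eq_abs _).symm
    _ ≤ frobNorm E := Real.sqrt_le_sqrt h3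

lemma weyl_sup {A B : Matrix (Fin p) (Fin p) ℝ} (hp : 1 ≤ p)
    (hA : A.IsHermitian) (hB : B.IsHermitian) :
    sSup (spectrum ℝ B) ≤ sSup (spectrum ℝ A) + frobNorm (B - A) := by
  obtain ⟨i, hi⟩ := exists_greatest_spec hp hB
  obtain ⟨v, hv1, hv2⟩ := exists_unit_eigvec hB i
  have key : sSup (spectrum ℝ B) = v ⬝ᵥ B *ᵥ v := by
    rw [hi.csSup_eq, hv2, dotProduct_smul, smul_eq_mul, hv1, mul_one]
  have split : v ⬝ᵥ B *ᵥ v = v ⬝ᵥ A *ᵥ v + v ⬝ᵥ (B - A) *ᵥ v := by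
    rw [Matrix.sub_mulVec, dotProduct_sub]; ring
  have h1 : v ⬝ᵥ A *ᵥ v ≤ sSup (spectrum ℝ A) := by
    have := (rayleigh_bounds hp hA v).2
    rwa [hv1, mul_one] at this
  have h2 : v ⬝ᵥ (B - A) *ᵥ v ≤ frobNorm (B - A) :=
    (abs_le.mp (quad_form_le_frob _ v hv1)).2
  rw [key, split]
  linarith

lemma weyl_inf {A B : Matrix (Fin p) (Fin p) ℝ} (hp : 1 ≤ p)
    (hA : A.IsHermitian) (hB : B.IsHermitian) :
    sInf (spectrum ℝ A) - frobNorm (B - A) ≤ sInf (spectrum ℝ B) := by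
  obtain ⟨i, hi⟩ := exists_least_spec hp hB
  obtain ⟨v, hv1, hv2⟩ := exists_unit_eigvec hB i
  have key : sInf (spectrum ℝ B) = v ⬝ᵥ B *ᵥ v := by
    rw [hi.csInf_eq, hv2, dotProduct_smul, smul_eq_mul, hv1, mul_one]
  have split : v ⬝ᵥ B *ᵥ v = v ⬝ᵥ A *ᵥ v + v ⬝ᵥ (B - A) *ᵥ v := by
    rw [Matrix.sub_mulVec, dotProduct_sub]; ring
  have h1 : sInf (spectrum ℝ A) ≤ v ⬝ᵥ A *ᵥ v := by
    have := (rayleigh_bounds hp hA v).1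
    rwa [hv1, mul_one] at this
  have h2 : -frobNorm (B - A) ≤ v ⬝ᵥ (B - A) *ᵥ v :=
    (abs_le.mp (quad_form_le_frob _ v hv1)).1
  rw [key, split]
  linarith

lemma frobNorm_sub_comm (A B : Matrix (Fin p) (Fin p) ℝ) :
    frobNorm (A - B) = frobNorm (B - A) := by
  unfold frobNorm
  congr 1
  refine Finset.sum_congr rfl fun i _ => Finset.sum_congr rfl fun j _ => ?_
  simp only [Matrix.sub_apply]
  ring

theorem stmt18_aux {p : ℕ} (hp : 1 ≤ p) (M : ℝ) (hM : 1 < M)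
    (Δ Δ' : Matrix (Fin p) (Fin p) ℝ)
    (hΔ : Δ.IsSymm) (hΔ' : Δ'.IsSymm)
    (hspec : ∀ x ∈ spectrum ℝ Δ, x ∈ Set.Icc (1 / M) M)
    (hclose : frobNorm (Δ' - Δ) < 1 / (2 * M)) :
    Δ'.PosDef ∧ |(sSup (spectrum ℝ Δ') / sInf (spectrum ℝ Δ')) - (sSup (spectrum ℝ Δ) / sInf (spectrum ℝ Δ))| ≤ 4 * M ^ 3 * frobNorm (Δ' - Δ) := by
  have hM0 : (0:ℝ) < M := by linarith
  have hΔH : Δ.IsHermitian := by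
    rw [Matrix.IsHermitian, Matrix.conjTranspose_eq_transpose_of_trivial]; exact hΔ
  have hΔ'H : Δ'.IsHermitian := by
    rw [Matrix.IsHermitian, Matrix.conjTranspose_eq_transpose_of_trivial]; exact hΔ'
  set ε := frobNorm (Δ' - Δ) with hεdef
  have hε0 : 0 ≤ ε := frobNorm_nonneg' _
  set a := sSup (spectrum ℝ Δ)
  set b := sInf (spectrum ℝ Δ)
  set a' := sSup (spectrum ℝ Δ')
  set b' := sInf (spectrum ℝ Δ')
  -- bounds on a, b
  obtain ⟨i, hi⟩ := exists_greatest_spec hp hΔH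
  obtain ⟨j, hj⟩ := exists_least_spec hp hΔH
  have haI := hspec _ hi.1
  have hbI := hspec _ hj.1
  have ha_eq : a = hΔH.eigenvalues i := hi.csSup_eq
  have hb_eq : b = hΔH.eigenvalues j := hj.csInf_eq
  have haM : a ≤ M := by rw [ha_eq]; exact haI.2
  have ha_lb : 1/M ≤ a := by rw [ha_eq]; exact haI.1
  have hbM : b ≤ M := by rw [hb_eq]; exact hbI.2
  have hb_lb : 1/M ≤ b := by rw [hb_eq]; exact hbI.1
  -- Weyl bounds
  have hw1 : a' ≤ a + ε := weyl_sup hp hΔH hΔ'H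
  have hw2 : a ≤ a' + ε := by
    have := weyl_sup hp hΔ'H hΔH
    rwa [frobNorm_sub_comm, ← hεdef] at this
  have hw3 : b - ε ≤ b' := weyl_inf hp hΔH hΔ'H
  have hw4 : b' - ε ≤ b := by
    have := weyl_inf hp hΔ'H hΔH
    rwa [frobNorm_sub_comm, ← hεdef] at this
  have hid : 1/M - 1/(2*M) = 1/(2*M) := by field_simp; ring
  have hb'half : 1/(2*M) ≤ b' := by linarith
  have h2M : (0:ℝ) < 2*M := by linarith
  have hb'pos : 0 < b' := lt_of_lt_of_le (by positivity) hb'half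
  have hbpos : 0 < b := lt_of_lt_of_le (by positivity) hb_lb
  have hapos : 0 < a := lt_of_lt_of_le (by positivity) ha_lb
  constructor
  · refine PosDef.of_dotProduct_mulVec_pos hΔ'H fun x hx => ?_
    have hstar : star x = x := by
      funext k; simp
    rw [hstar]
    have hxx : 0 < x ⬝ᵥ x := by
      rcases lt_or_eq_of_le (Finset.sum_nonneg fun k _ => mul_self_nonneg (x k) :
          (0:ℝ) ≤ x ⬝ᵥ x) with h | h
      · exact h
      · exact absurd (dotProduct_self_eq_zero.mp h.symm) hx
    have hr := (rayleigh_bounds hp hΔ'H x).1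
    have : 0 < b' * (x ⬝ᵥ x) := mul_pos hb'pos hxx
    linarith
  · have h1 : |a' - a| ≤ ε := abs_le.mpr ⟨by linarith, by linarith⟩
    have h2 : |b - b'| ≤ ε := abs_le.mpr ⟨by linarith, by linarith⟩
    have habs : |a'*b - a*b'| ≤ 2*M*ε := by
      have hsplit : a'*b - a*b' = (a'-a)*b + a*(b-b') := by ring
      rw [hsplit]
      calc |(a'-a)*b + a*(b-b')| ≤ |(a'-a)*b| + |a*(b-b')| := abs_add_le _ _
        _ = |a' - a| * |b| + |a| * |b - b'| := by rw [abs_mul, abs_mul]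
        _ ≤ ε*M + M*ε := by
            rw [abs_of_pos hbpos, abs_of_pos hapos]
            exact add_le_add (mul_le_mul h1 hbM hbpos.le hε0)
              (mul_le_mul haM h2 (abs_nonneg _) hM0.le)
        _ = 2*M*ε := by ring
    have hkey : a'/b' - a/b = (a'*b - a*b')/(b'*b) := by
      field_simp
    rw [hkey, abs_div, abs_of_pos (mul_pos hb'pos hbpos), div_le_iff₀ (mul_pos hb'pos hbpos)]
    have hb'1 : 1 ≤ b'*(2*M) := by rwa [← div_le_iff₀ h2M]
    have hb1 : 1 ≤ b*M := by rwa [← div_le_iff₀ hM0]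
    have h12 : 1 ≤ (b'*(2*M))*(b*M) := by nlinarith
    have hεM : 0 ≤ 2*M*ε := by positivity
    calc |a'*b - a*b'| ≤ 2*M*ε := habs
      _ ≤ (2*M*ε) * ((b'*(2*M))*(b*M)) := le_mul_of_one_le_right hεM h12
      _ = 4*M^3*ε*(b'*b) := by ring


/-- local Lipschitz character of the condition number. If all
eigenvalues of the symmetric matrix `Δ` lie in `[1/M, M]` and the symmetric
matrix `Δ'` satisfies `‖Δ' − Δ‖_F < 1/(2M)`, then `Δ'` is positive definite and
`|κ(Δ') − κ(Δ)| ≤ 4M³·‖Δ' − Δ‖_F`. -/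
theorem stmt18 {p : ℕ} (hp : 1 ≤ p) (M : ℝ) (hM : 1 < M)
    (Δ Δ' : Matrix (Fin p) (Fin p) ℝ)
    (hΔ : Δ.IsSymm) (hΔ' : Δ'.IsSymm)
    (hspec : ∀ x ∈ spectrum ℝ Δ, x ∈ Set.Icc (1 / M) M)
    (hclose : frobNorm (Δ' - Δ) < 1 / (2 * M)) :
    Δ'.PosDef ∧ |condNum Δ' - condNum Δ| ≤ 4 * M ^ 3 * frobNorm (Δ' - Δ) := by
  have h := stmt18_aux hp M hM Δ Δ' hΔ hΔ' hspec hclose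
  exact ⟨h.1, by simpa [condNum] using h.2⟩
end
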